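/- arXiv:1212.1815 — 5 statements merged into one kernel-verified Lean document; each statement's English description precedes it below -/
import Mathlib

section
/- Let n ≥ 1 and let K ⊂ ℝ^n be a nonempty convex polyhedron. Then ℝ^n \ K is disconnected (that is, nonempty and not a preconnected subspace) if and only if K is a layer, i.e., there exist an affine automorphism T of ℝ^n and a real number a ≥ 0 such that T(K) = [−a,a] × ℝ^{n−1}. -/
/-!
Write `K = ⋂ₖ {Lₖ ≤ cₖ}`, so that `Kᶜ` is the union of the open half-spaces `{cₖ < Lₖ}`, each of
them connected. If this union is disconnected, the half-spaces fall into two nonempty classes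
such that every member of one class is disjoint from every member of the other. Two open
half-spaces are disjoint only if their functionals are negatively proportional, so every `Lₖ`
is a multiple of one functional `ℓ`, at least one positive and one negative multiple occur, and
`K = ℓ⁻¹[a, b]`; a linear change of coordinates making `ℓ` the first coordinate, followed by a
translation, turns this into a layer. Conversely, the first coordinate maps the complement of a
layer onto a subset of `ℝ` containing `±(a + 1)` but not `0`, so it is not connected.
-/

open Bornology Pointwise

/-- A convex polyhedron in `ℝ^n`: a finite intersection of closed half-spaces
`{x | ℓ x ≤ c}` with `ℓ` a nonzero linear functional (the empty intersection,
i.e. all of `ℝ^n`, is allowed). -/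
def IsConvexPolyhedron (n : ℕ) (K : Set (Fin n → ℝ)) : Prop :=
  ∃ (m : ℕ) (L : Fin m → ((Fin n → ℝ) →ₗ[ℝ] ℝ)) (c : Fin m → ℝ),
    (∀ i, L i ≠ 0) ∧ K = {x | ∀ i, L i x ≤ c i}

/-- The dimension of a subset of `ℝ^n`: the dimension of its affine span. -/
noncomputable def polyDim (n : ℕ) (K : Set (Fin n → ℝ)) : ℕ :=
  Module.finrank ℝ (affineSpan ℝ K).direction

/-- `F` is a face of `K`: the intersection of `K` with a supporting hyperplane,
i.e. an affine hyperplane meeting `K` such that `K` lies in one of the two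
closed half-spaces it bounds. -/
def IsFaceOf (n : ℕ) (K F : Set (Fin n → ℝ)) : Prop :=
  ∃ (L : (Fin n → ℝ) →ₗ[ℝ] ℝ) (c : ℝ), L ≠ 0 ∧
    (K ∩ {x | L x = c}).Nonempty ∧ (∀ x ∈ K, L x ≤ c) ∧ F = K ∩ {x | L x = c}

/-- `p` is a vertex of `K`: the singleton `{p}` is a face of `K`. -/
def IsVertexOf (n : ℕ) (K : Set (Fin n → ℝ)) (p : Fin n → ℝ) : Prop :=
  IsFaceOf n K {p}

/-- An edge of `K` is a face of dimension `1`. -/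
def IsEdgeOf (n : ℕ) (K A : Set (Fin n → ℝ)) : Prop :=
  IsFaceOf n K A ∧ polyDim n A = 1

/-- A facet of `K` is a face of dimension `dim K - 1`. -/
def IsFacetOf (n : ℕ) (K F : Set (Fin n → ℝ)) : Prop :=
  IsFaceOf n K F ∧ polyDim n F + 1 = polyDim n K

/-- `A` is an unbounded edge of `K` with direction vector `v`,
i.e. `A = q + ℝ≥0·v` for some vertex `q` of `K` and `v ≠ 0`. -/
def IsUnboundedEdgeWithDir (n : ℕ) (K A : Set (Fin n → ℝ)) (v : Fin n → ℝ) : Prop :=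
  IsEdgeOf n K A ∧ ¬ IsBounded A ∧ v ≠ 0 ∧
    ∃ q, IsVertexOf n K q ∧ A = {x | ∃ t : ℝ, 0 ≤ t ∧ x = q + t • v}

/-- The recession cone of `K`. -/
def recCone (n : ℕ) (K : Set (Fin n → ℝ)) : Set (Fin n → ℝ) :=
  {v | ∀ x ∈ K, ∀ t : ℝ, 0 ≤ t → x + t • v ∈ K}

/-- The projection `π_n : ℝ^n → ℝ^n`, `(x₁,…,x_n) ↦ (x₁,…,x_{n-1},0)`. -/
def projLast (n : ℕ) (x : Fin n → ℝ) : Fin n → ℝ :=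
  fun i => if (i : ℕ) = n - 1 then 0 else x i

/-- The set `A_K`, realized inside the hyperplane `{x_n = 0}` of `ℝ^n`:
points `y = (a,0)` such that the fiber `I_a = π_n⁻¹(a,0) ∩ K` is nonempty
but does not contain `(a,0)`. -/
def AKset (n : ℕ) (K : Set (Fin n → ℝ)) : Set (Fin n → ℝ) :=
  {y | (∀ i : Fin n, (i : ℕ) = n - 1 → y i = 0) ∧
    ({x | projLast n x = y} ∩ K).Nonempty ∧ y ∉ K}

/-- `K` is in first trimming position with respect to its facet `F`. -/
def FirstTrimmingPosition (n : ℕ) (K F : Set (Fin n → ℝ)) : Prop :=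
  IsFacetOf n K F ∧
  (∀ x ∈ F, ∀ i : Fin n, (i : ℕ) = n - 2 → x i = 0) ∧
  (∀ x ∈ K, ∀ i : Fin n, (i : ℕ) = n - 2 → x i ≤ 0) ∧
  (∀ y : Fin n → ℝ, IsBounded ({x | projLast n x = y} ∩ K)) ∧
  IsBounded (AKset n K)

/-- `K` is in second trimming position with respect to its facet `F`. -/
def SecondTrimmingPosition (n : ℕ) (K F : Set (Fin n → ℝ)) : Prop :=
  IsFacetOf n K F ∧
  (∀ x ∈ F, ∀ i : Fin n, (i : ℕ) = n - 1 → x i = 0) ∧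
  (∀ x ∈ K, ∀ i : Fin n, (i : ℕ) = n - 1 → x i ≤ 0) ∧
  IsBounded (AKset n K)

/-- A polynomial map `ℝ^n → ℝ^m`: each component is given by a polynomial. -/
def IsPolynomialMap (n m : ℕ) (f : (Fin n → ℝ) → (Fin m → ℝ)) : Prop :=
  ∃ p : Fin m → MvPolynomial (Fin n) ℝ, ∀ x i, f x i = MvPolynomial.eval x (p i)

open Set

section HalfSpaces

variable {V : Type*} [AddCommGroup V] [Module ℝ V]

theorem LinearMap.exists_nonpos_smul_of_disjoint_halfSpaces {L L' : V →ₗ[ℝ] ℝ} (hL : L ≠ 0)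
    {c c' : ℝ} (h : Disjoint {x | c < L x} {x | c' < L' x}) : ∃ μ : ℝ, μ ≤ 0 ∧ L' = μ • L := by
  have hle : ∀ x, c < L x → L' x ≤ c' := fun x hx =>
    not_lt.1 fun hx' => disjoint_left.1 h hx hx'
  obtain ⟨v, hv⟩ := LinearMap.surjective hL 1
  -- `L'` is bounded above on every line parallel to `ker L` inside `{c < L}`, hence constant there
  have hker : ∀ w, L w = 0 → L' w = 0 := by
    intro w hw
    by_contra hw'
    set s := (c' + 1 - L' ((c + 1) • v)) / L' w
    have := hle ((c + 1) • v + s • w) (by simp [hv, hw])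
    simp only [map_add, map_smul, smul_eq_mul, s, div_mul_cancel₀ _ hw'] at this
    linarith
  have hrepr : L' = L' v • L := by
    ext x
    have := hker (x - L x • v) (by simp [hv])
    simp only [map_sub, map_smul, smul_eq_mul] at this
    simp only [LinearMap.smul_apply, smul_eq_mul]
    linarith
  refine ⟨L' v, not_lt.1 fun hpos => ?_, hrepr⟩
  set s := max (c + 1) ((c' + 1) / L' v)
  have hs : c' + 1 ≤ L' v * s := (div_le_iff₀' hpos).1 (le_max_right _ _)
  have := hle (s • v) (by simp [hv, s])
  rw [map_smul, smul_eq_mul] at this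
  linarith

theorem exists_smul_eq_of_disjoint_halfSpaces {ι : Type*} {L : ι → V →ₗ[ℝ] ℝ}
    (hL : ∀ k, L k ≠ 0)
    {c : ι → ℝ} {A : Set ι} {i j : ι} (hi : i ∈ A) (hj : j ∉ A)
    (hdisj : ∀ a ∈ A, ∀ b ∉ A, Disjoint {x | c a < L a x} {x | c b < L b x}) :
    ∃ r : ι → ℝ, r i = 1 ∧ r j < 0 ∧ ∀ k, L k = r k • L i := by
  obtain ⟨μ, hμ, hLj⟩ :=
    LinearMap.exists_nonpos_smul_of_disjoint_halfSpaces (hL i) (hdisj i hi j hj)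
  have hμneg : μ < 0 := hμ.lt_of_ne fun h0 => hL j (by rw [hLj, h0, zero_smul])
  have hprop : ∀ k, ∃ r : ℝ, L k = r • L i := by
    intro k
    by_cases hk : k ∈ A
    · obtain ⟨ν, -, hν⟩ :=
        LinearMap.exists_nonpos_smul_of_disjoint_halfSpaces (hL j) (hdisj k hk j hj).symm
      exact ⟨ν * μ, by rw [hν, hLj, smul_smul]⟩
    · obtain ⟨ν, -, hν⟩ :=
        LinearMap.exists_nonpos_smul_of_disjoint_halfSpaces (hL i) (hdisj i hi k hk)
      exact ⟨ν, hν⟩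
  obtain ⟨v, hv⟩ := LinearMap.surjective (hL i) 1
  refine ⟨fun k => L k v, hv, by simpa [hLj, hv] using hμneg, fun k => ?_⟩
  obtain ⟨r, hr⟩ := hprop k
  simp [hr, hv]

end HalfSpaces

theorem exists_partition_of_not_isPreconnected_iUnion {X ι : Type*} [TopologicalSpace X]
    {s : ι → Set X} (hs : ∀ k, IsPreconnected (s k)) (h : ¬ IsPreconnected (⋃ k, s k)) :
    ∃ (A : Set ι) (i j : ι), i ∈ A ∧ j ∉ A ∧ ∀ a ∈ A, ∀ b ∉ A, Disjoint (s a) (s b) := by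
  obtain ⟨i, j, hij⟩ : ∃ i j, ¬ Relation.ReflTransGen (fun a b => (s a ∩ s b).Nonempty) i j := by
    by_contra! hchain
    exact h (IsPreconnected.iUnion_of_reflTransGen hs hchain)
  refine ⟨{k | Relation.ReflTransGen _ i k}, i, j, .refl, hij, fun a ha b hb => ?_⟩
  rw [disjoint_iff_inter_eq_empty, ← not_nonempty_iff_eq_empty]
  exact fun hab => hb (ha.tail hab)

theorem exists_eq_Icc_of_forall_mul_le {ι : Type*} {r c : ι → ℝ} {i j : ι} (hi : 0 < r i)
    (hj : r j < 0) (hne : {t : ℝ | ∀ k, r k * t ≤ c k}.Nonempty) :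
    ∃ a b, a ≤ b ∧ {t : ℝ | ∀ k, r k * t ≤ c k} = Icc a b := by
  set S := {t : ℝ | ∀ k, r k * t ≤ c k}
  have hconv : Convex ℝ S := fun x hx y hy α β hα hβ hαβ k => by
    simp only [smul_eq_mul]
    linear_combination mul_le_mul_of_nonneg_left (hx k) hα + mul_le_mul_of_nonneg_left (hy k) hβ
      + c k * hαβ
  have hclosed : IsClosed S := by
    simp only [S, ofPred_forall]
    exact isClosed_iInter fun k => isClosed_le (continuous_const_mul _) continuous_const
  have hbdda : BddAbove S := ⟨c i / r i, fun t ht => (le_div_iff₀' hi).2 (ht i)⟩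
  have hbddb : BddBelow S := ⟨c j / r j, fun t ht => (div_le_iff_of_neg' hj).2 (ht j)⟩
  exact ⟨sInf S, sSup S, csInf_le_csSup hne hbddb hbdda,
    eq_Icc_csInf_csSup_of_connected_bdd_closed ⟨hne, hconv.isPreconnected⟩ hbddb hbdda hclosed⟩

theorem LinearMap.exists_linearEquiv_apply_eq {ι : Type*} [Fintype ι] [DecidableEq ι]
    {ℓ : (ι → ℝ) →ₗ[ℝ] ℝ} (hℓ : ℓ ≠ 0) (i : ι) :
    ∃ e : (ι → ℝ) ≃ₗ[ℝ] (ι → ℝ), ∀ x, e x i = ℓ x := by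
  obtain ⟨k, hk⟩ : ∃ k, ℓ (Pi.single k 1) ≠ 0 := by
    by_contra! h
    exact hℓ (LinearMap.pi_ext' fun k => LinearMap.ext_ring (h k))
  -- drop `x k`, on which `ℓ` depends, and put `ℓ x` in slot `i` (and `x i` in slot `k`)
  let M : (ι → ℝ) →ₗ[ℝ] (ι → ℝ) :=
    LinearMap.pi fun j => if j = i then ℓ else LinearMap.proj (Equiv.swap i k j)
  have hM : Function.Injective M := by
    rw [← LinearMap.ker_eq_bot, Submodule.eq_bot_iff]
    intro x hx
    have hoff : ∀ m ≠ k, x m = 0 := fun m hm => by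
      have := congr_fun hx (Equiv.swap i k m)
      simpa [M, Equiv.swap_apply_eq_iff, hm] using this
    have hx_eq : x = x k • Pi.single k 1 := by
      ext m
      by_cases hm : m = k
      · subst hm; simp
      · simp [hoff m hm, hm]
    have hℓx : ℓ x = 0 := by simpa [M] using congr_fun hx i
    rw [hx_eq, map_smul, smul_eq_mul, mul_eq_zero] at hℓx
    rw [hx_eq, hℓx.resolve_right hk, zero_smul]
  exact ⟨LinearEquiv.ofInjectiveEndo M hM, fun x => by simp [M]⟩

theorem exists_affineEquiv_image_preimage_Icc {ι : Type*} [Fintype ι] [DecidableEq ι]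
    {ℓ : (ι → ℝ) →ₗ[ℝ] ℝ} (hℓ : ℓ ≠ 0) (i : ι) (a b : ℝ) :
    ∃ T : (ι → ℝ) ≃ᵃ[ℝ] (ι → ℝ), T '' (ℓ ⁻¹' Icc a b) = {x | |x i| ≤ (b - a) / 2} := by
  obtain ⟨e, he⟩ := LinearMap.exists_linearEquiv_apply_eq hℓ i
  let T := e.toAffineEquiv.trans (AffineEquiv.constVAdd ℝ (ι → ℝ) (Pi.single i (-((a + b) / 2))))
  have hT : ∀ x, T x i = ℓ x - (a + b) / 2 := fun x => by
    simp [T, he, sub_eq_neg_add]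
  refine ⟨T, ?_⟩
  ext y
  have hy := hT (T.symm y)
  rw [T.apply_symm_apply] at hy
  rw [← T.preimage_symm, mem_preimage, mem_preimage, mem_Icc, mem_ofPred_eq, abs_le, hy]
  constructor <;> rintro ⟨h₁, h₂⟩ <;> constructor <;> linarith

theorem not_isPreconnected_compl_setOf_abs_le {ι : Type*} (i : ι) {a : ℝ} (ha : 0 ≤ a) :
    ¬ IsPreconnected {x : ι → ℝ | |x i| ≤ a}ᶜ := by
  intro h
  have hneg : (fun _ => -(a + 1)) ∈ {x : ι → ℝ | |x i| ≤ a}ᶜ := by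
    simp only [mem_compl_iff, mem_ofPred_eq, not_le, lt_abs]; right; linarith
  have hpos : (fun _ => a + 1) ∈ {x : ι → ℝ | |x i| ≤ a}ᶜ := by
    simp only [mem_compl_iff, mem_ofPred_eq, not_le, lt_abs]; left; linarith
  have hIcc := (h.image _ (continuous_apply i).continuousOn).Icc_subset
    ⟨_, hneg, rfl⟩ ⟨_, hpos, rfl⟩
  obtain ⟨x, hx, hx0⟩ :=
    hIcc (show (0 : ℝ) ∈ Icc (-(a + 1)) (a + 1) from ⟨by linarith, by linarith⟩)
  exact hx (by rw [mem_ofPred_eq, show x i = 0 from hx0, abs_zero]; exact ha)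

/-- A nonempty convex polyhedron `K ⊆ ℝ^n` disconnects `ℝ^n` if and only if it is a
layer, i.e. affinely equivalent to `[-a,a] × ℝ^{n-1}` for some `a ≥ 0`. -/
theorem complement_disconnected_iff_layer (n : ℕ) (hn : 1 ≤ n)
    (K : Set (Fin n → ℝ)) (hpoly : IsConvexPolyhedron n K) (hne : K.Nonempty) :
    (Kᶜ.Nonempty ∧ ¬ IsPreconnected Kᶜ) ↔
      ∃ (T : (Fin n → ℝ) ≃ᵃ[ℝ] (Fin n → ℝ)) (a : ℝ), 0 ≤ a ∧
        T '' K = {x : Fin n → ℝ | |x ⟨0, by omega⟩| ≤ a} := by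
  constructor
  · rintro ⟨-, hdis⟩
    obtain ⟨m, L, c, hL, rfl⟩ := hpoly
    have hcompl : {x | ∀ k, L k x ≤ c k}ᶜ = ⋃ k, {x | c k < L k x} := by ext; simp
    rw [hcompl] at hdis
    obtain ⟨A, i, j, hi, hj, hdisj⟩ := exists_partition_of_not_isPreconnected_iUnion
      (fun k => (convex_halfSpace_gt (L k).isLinear (c k)).isPreconnected) hdis
    obtain ⟨r, hri, hrj, hr⟩ := exists_smul_eq_of_disjoint_halfSpaces hL hi hj hdisj
    have hK : {x | ∀ k, L k x ≤ c k} = L i ⁻¹' {t | ∀ k, r k * t ≤ c k} := by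
      ext x
      exact forall_congr' fun k => by rw [hr k]; rfl
    rw [hK] at hne ⊢
    obtain ⟨x, hx⟩ := hne
    obtain ⟨a, b, hab, hS⟩ := exists_eq_Icc_of_forall_mul_le (hri ▸ one_pos) hrj ⟨L i x, hx⟩
    obtain ⟨T, hT⟩ := exists_affineEquiv_image_preimage_Icc (hL i) ⟨0, by omega⟩ a b
    exact ⟨T, (b - a) / 2, by linarith, by rw [hS, hT]⟩
  · rintro ⟨T, a, ha, hTK⟩
    have hdis : ¬ IsPreconnected Kᶜ := fun hpre =>
      not_isPreconnected_compl_setOf_abs_le _ ha <| by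
      rw [← hTK, ← image_compl_eq T.bijective]
      exact hpre.image T T.continuous_of_finiteDimensional.continuousOn
    exact ⟨nonempty_iff_ne_empty.2 fun h => hdis (h ▸ isPreconnected_empty), hdis⟩
end

section
/- Let K ⊂ ℝ³ be a non-degenerate 3-dimensional unbounded convex polyhedron and let F be a facet of K containing two unbounded edges of K whose direction vectors are linearly independent. Then K can be placed in first trimming position with respect to F. -/
open Bornology Pointwise

/-!
Write `K = {x | ∀ i, L i x ≤ c i}` and `F = K ∩ {Λ = d}`. Since `K` has a vertex, its recession
cone contains no line, so some direction `u = s • v₁ - (1 - s) • v₂` of the plane of `F` lies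
neither in the cone nor in its negative: every line parallel to `u` meets `K` in a bounded segment.
In affine coordinates `(a, b, t)` along `v₁ + v₂`, a direction leaving `F`, and `u`, the face `F`
lies in `b = 0`, and `A_K` is the set of `(a, b)` over which `K` is nonempty but misses the plane
`t = ω₁ * b + ω₂`. Eliminating `t` (Fourier–Motzkin) describes the shadow of `K`. As `v₁` and `v₂`
lie on either side of the `a`-axis, an inequality involving `t` can only fail where `a` is
bounded above in terms of `b`. If the shadow recedes only along the `a`-axis, it is bounded in
`b` and `t = 0` works. Otherwise it also recedes along some `(xm, -1)`: shear the plane to contain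
a lift of that ray, and shift it so that the inequalities constant along the lift hold on it.
-/

theorem div_le_div_iff_of_pos_of_neg {x y a b : ℝ} (ha : 0 < a) (hb : b < 0) :
    y / b ≤ x / a ↔ 0 ≤ -b * x + a * y := by
  rw [← neg_div_neg_eq, div_le_div_iff₀ (neg_pos.2 hb) ha]
  constructor <;> intro h <;> linarith

theorem nonpos_of_forall_add_mul_le {a b c : ℝ} (h : ∀ t : ℝ, 0 ≤ t → a + t * b ≤ c) : b ≤ 0 := by
  by_contra! hb
  have h0 := h 0 le_rfl
  have := h ((c - a + 1) / b) (div_nonneg (by linarith) hb.le)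
  rw [div_mul_cancel₀ _ hb.ne'] at this
  linarith

section FourierMotzkin

variable {ι : Type*}

theorem exists_forall_mul_le_iff [Finite ι] {r d : ι → ℝ} :
    (∃ t, ∀ i, r i * t ≤ d i) ↔
      (∀ i, r i = 0 → 0 ≤ d i) ∧ ∀ i j, 0 < r i → r j < 0 → d j / r j ≤ d i / r i := by
  constructor
  · rintro ⟨t, ht⟩
    refine ⟨fun i hi => by simpa [hi] using ht i, fun i j hi hj => ?_⟩
    calc d j / r j ≤ t := (div_le_iff_of_neg hj).2 (by linarith [ht j])
      _ ≤ d i / r i := (le_div_iff₀ hi).2 (by linarith [ht i])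
  · rintro ⟨hzero, hcross⟩
    obtain ⟨M, hM⟩ := Finite.bddBelow_range fun i => if 0 < r i then d i / r i else 0
    set S := insert M {x | ∃ j, r j < 0 ∧ x = d j / r j}
    have hS : BddAbove S := by
      obtain ⟨N, hN⟩ := Finite.bddAbove_range fun j => d j / r j
      refine ⟨max M N, ?_⟩
      rintro x (rfl | ⟨j, -, rfl⟩)
      · exact le_max_left _ _
      · exact (hN ⟨j, rfl⟩).trans (le_max_right _ _)
    refine ⟨sSup S, fun i => ?_⟩
    rcases lt_trichotomy (r i) 0 with hi | hi | hi
    · exact (div_le_iff_of_neg' hi).1 (le_csSup hS (.inr ⟨i, hi, rfl⟩))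
    · simpa [hi] using hzero i hi
    · refine (le_div_iff₀' hi).1 (csSup_le (Set.insert_nonempty _ _) ?_)
      rintro x (rfl | ⟨j, hj, rfl⟩)
      · simpa [hi] using hM ⟨i, rfl⟩
      · exact hcross i j hi hj

/-- The rows of the Fourier–Motzkin elimination of the variable whose coefficients are `r`:
a row `i` with `r i = 0` is kept, and each pair `(i, j)` with `r i > 0 > r j` yields the
combination `-r j • (row i) + r i • (row j)`, in which that variable cancels. -/
def fmRow (r f : ι → ℝ) : ι ⊕ (ι × ι) → ℝ
  | .inl i => f i
  | .inr (i, j) => -r j * f i + r i * f j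

def FMAdmissible (r : ι → ℝ) : ι ⊕ (ι × ι) → Prop
  | .inl i => r i = 0
  | .inr (i, j) => 0 < r i ∧ r j < 0

theorem fmRow_add_mul (r f g : ι → ℝ) (a b : ℝ) (k : ι ⊕ (ι × ι)) :
    fmRow r (fun i => f i * a + g i * b) k = fmRow r f k * a + fmRow r g k * b := by
  rcases k with i | ⟨i, j⟩ <;> simp only [fmRow]; ring

theorem fmRow_mul (r f : ι → ℝ) (a : ℝ) (k : ι ⊕ (ι × ι)) :
    fmRow r (fun i => f i * a) k = fmRow r f k * a := by
  simpa using fmRow_add_mul r f 0 a 0 k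

theorem fmRow_zero (r : ι → ℝ) (k : ι ⊕ (ι × ι)) : fmRow r 0 k = 0 := by
  rcases k with i | ⟨i, j⟩ <;> simp [fmRow]

theorem fmRow_nonpos {r f : ι → ℝ} (hf : ∀ i, f i ≤ 0) {k : ι ⊕ (ι × ι)}
    (hk : FMAdmissible r k) : fmRow r f k ≤ 0 := by
  rcases k with i | ⟨i, j⟩
  · exact hf i
  · have := hf i; have := hf j; have := hk.1; have := hk.2
    simp only [fmRow]; nlinarith

theorem exists_forall_add_mul_le_iff [Finite ι] {r v c : ι → ℝ} :
    (∃ t, ∀ i, v i + r i * t ≤ c i) ↔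
      ∀ k, FMAdmissible r k → fmRow r v k ≤ fmRow r c k := by
  have hiff : (∃ t, ∀ i, v i + r i * t ≤ c i) ↔ ∃ t, ∀ i, r i * t ≤ c i - v i :=
    exists_congr fun t => forall_congr' fun i => by constructor <;> intro h <;> linarith
  rw [hiff, exists_forall_mul_le_iff]
  constructor
  · rintro ⟨hzero, hcross⟩ (i | ⟨i, j⟩) hk
    · simpa [fmRow] using hzero i hk
    · have h := hcross i j hk.1 hk.2
      rw [div_le_div_iff_of_pos_of_neg hk.1 hk.2] at h
      simp only [fmRow]; nlinarith
  · intro h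
    refine ⟨fun i hi => by simpa [fmRow] using h (.inl i) hi, fun i j hi hj => ?_⟩
    have := h (.inr (i, j)) ⟨hi, hj⟩
    simp only [fmRow] at this
    rw [div_le_div_iff_of_pos_of_neg hi hj]; nlinarith

end FourierMotzkin

section OneVariable

variable {κ : Type*} [Finite κ] {A B : κ → ℝ}

theorem exists_eq_zero_and_neg_of_not_exists (hA : ∀ k, A k ≤ 0)
    (h : ¬ ∃ x, ∀ k, A k * x ≤ B k) : ∃ k, A k = 0 ∧ B k < 0 := by
  by_contra! hB
  refine h (exists_forall_mul_le_iff.2 ⟨hB, fun i j hi _ => ?_⟩)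
  exact absurd hi (hA i).not_gt

theorem exists_tight_of_nonpos (hA : ∀ k, A k ≤ 0) (hneg : ∃ k, A k < 0)
    (hne : ∃ x, ∀ k, A k * x ≤ B k) :
    ∃ x k, A k < 0 ∧ A k * x = B k ∧ ∀ k', A k' * x ≤ B k' := by
  obtain ⟨x₀, hx₀⟩ := hne
  obtain ⟨k, hk, hmax⟩ := Set.exists_max_image {k | A k < 0} (fun k => B k / A k)
    (Set.toFinite _) hneg
  refine ⟨B k / A k, k, hk, mul_div_cancel₀ _ hk.ne, fun k' => ?_⟩
  rcases (hA k').lt_or_eq with hk' | hk'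
  · exact (div_le_iff_of_neg' hk').1 (hmax k' hk')
  · simpa [hk'] using hx₀ k'

end OneVariable

section Trimming

variable {ι : Type*} {p q r c : ι → ℝ}

def Feasible (p q r c : ι → ℝ) (a b t : ℝ) : Prop :=
  ∀ i, p i * a + q i * b + r i * t ≤ c i

theorem exists_feasible_iff [Finite ι] {a b : ℝ} :
    (∃ t, Feasible p q r c a b t) ↔
      ∀ k, FMAdmissible r k → fmRow r p k * a + fmRow r q k * b ≤ fmRow r c k := by
  simp only [Feasible, ← fmRow_add_mul]
  exact exists_forall_add_mul_le_iff (v := fun i => p i * a + q i * b)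

theorem eq_zero_of_forall_mul_nonpos (hpos : ∃ i, 0 < r i) (hneg : ∃ i, r i < 0) {z : ℝ}
    (h : ∀ i, r i * z ≤ 0) : z = 0 := by
  obtain ⟨i, hi⟩ := hpos
  obtain ⟨j, hj⟩ := hneg
  nlinarith [h i, h j]

section Rays

variable {ξ₁ θ₁ ξ₂ θ₂ : ℝ} (hξ₁ : 0 < ξ₁) (hθ₁ : 0 < θ₁) (hξ₂ : 0 < ξ₂) (hθ₂ : θ₂ < 0)
  (h₁ : Feasible p q r 0 ξ₁ 0 θ₁) (h₂ : Feasible p q r 0 ξ₂ 0 θ₂)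
include hξ₁ hθ₁ hξ₂ hθ₂ h₁ h₂

theorem nonpos_of_rays (i : ι) : p i ≤ 0 := by
  have := h₁ i; have := h₂ i
  simp only [mul_zero, add_zero, Pi.zero_apply] at *
  nlinarith [mul_pos hξ₁ (neg_pos.2 hθ₂), mul_pos hξ₂ hθ₁]

theorem neg_of_rays {i : ι} (hi : r i ≠ 0) : p i < 0 := by
  refine (nonpos_of_rays hξ₁ hθ₁ hξ₂ hθ₂ h₁ h₂ i).lt_of_ne fun hp => ?_
  have := h₁ i; have := h₂ i
  simp only [hp, mul_zero, zero_mul, add_zero, zero_add, Pi.zero_apply] at *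
  rcases hi.lt_or_gt with hr | hr <;> nlinarith

/-- Otherwise some `(-1, 0, z)` is a recession direction. Adding it to `(ξ, 0, θ)` gives the
vertical recession direction `(0, 0, ξ * z + θ)`, which vanishes as `r` takes both signs; so
`z = -θ₁ / ξ₁ < 0 < -θ₂ / ξ₂ = z`. -/
theorem exists_fmRow_neg_of_rays [Finite ι] (hpos : ∃ i, 0 < r i) (hneg : ∃ i, r i < 0) :
    ∃ k, FMAdmissible r k ∧ fmRow r p k < 0 := by
  by_contra! h
  obtain ⟨z, hz⟩ : ∃ z, Feasible p q r 0 (-1) 0 z :=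
    exists_feasible_iff.2 fun k hk => by simpa [fmRow_zero] using h k hk
  have vertical {ξ θ : ℝ} (hξ : 0 < ξ) (hr : Feasible p q r 0 ξ 0 θ) : ξ * z + θ = 0 :=
    eq_zero_of_forall_mul_nonpos hpos hneg fun i => by
      have := hz i; have := hr i
      simp only [mul_zero, add_zero, Pi.zero_apply] at *
      nlinarith
  nlinarith [vertical hξ₁ h₁, vertical hξ₂ h₂, mul_pos hξ₁ hξ₂]

end Rays

theorem Feasible.row_of_eq_zero {a b t : ℝ} (h : Feasible p q r c a b t) {i : ι} (hi : r i = 0)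
    (t' : ℝ) : p i * a + q i * b + r i * t' ≤ c i := by
  simpa [hi] using h i

theorem exists_bound_of_forall_row [Finite ι] {P : ℝ → ℝ → Prop} {Q : ι → ℝ → ℝ → Prop}
    (h : ∀ i, ∃ R, ∀ a b, P a b → ¬ Q i a b → |a| ≤ R ∧ |b| ≤ R) :
    ∃ R, ∀ a b, P a b → ¬ (∀ i, Q i a b) → |a| ≤ R ∧ |b| ≤ R := by
  choose R hR using h
  obtain ⟨M, hM⟩ := Finite.bddAbove_range R
  refine ⟨M, fun a b hab hQ => ?_⟩
  obtain ⟨i, hi⟩ := not_forall.1 hQ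
  obtain ⟨ha, hb⟩ := hR i a b hab hi
  have := hM ⟨i, rfl⟩
  exact ⟨ha.trans this, hb.trans this⟩

/-- The rows vanishing on the recession direction `(xm, -1, y₂)` only depend on `τ = a + xm * b`
and `t + y₂ * b`. By Fourier–Motzkin the set of `τ` for which they are solvable is closed, so it
contains every limit of `τ`-values of feasible points. -/
theorem exists_offset_of_mem_closure [Finite ι] {xm y₂ τ₀ : ℝ}
    (hτ₀ : τ₀ ∈ closure {τ | ∃ a b, (∃ t, Feasible p q r c a b t) ∧ τ = a + xm * b}) :
    ∃ s, ∀ i, p i * xm + q i * (-1) + r i * y₂ = 0 → p i * τ₀ + r i * s ≤ c i := by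
  set J := {i // p i * xm + q i * (-1) + r i * y₂ = 0}
  let G : Set ℝ := {τ | ∃ s, ∀ i : J, p i * τ + r i * s ≤ c i}
  have hG : IsClosed G := by
    have : G = ⋂ (k) (_ : FMAdmissible (fun i : J => r i) k),
        {τ | fmRow (fun i : J => r i) (fun i => p i) k * τ ≤
          fmRow (fun i : J => r i) (fun i => c i) k} := by
      ext τ
      simp only [G, Set.mem_iInter, ← fmRow_mul]
      exact exists_forall_add_mul_le_iff
    rw [this]
    exact isClosed_biInter fun k _ => isClosed_le (by fun_prop) (by fun_prop)
  have hsub : {τ | ∃ a b, (∃ t, Feasible p q r c a b t) ∧ τ = a + xm * b} ⊆ G := by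
    rintro _ ⟨a, b, ⟨t, ht⟩, rfl⟩
    refine ⟨t + y₂ * b, fun ⟨i, hi⟩ => ?_⟩
    have := ht i
    linear_combination this + b * hi
  obtain ⟨s, hs⟩ := closure_minimal hsub hG hτ₀
  exact ⟨s, fun i hi => hs ⟨i, hi⟩⟩

section Cases

variable (hp : ∀ i, r i ≠ 0 → p i < 0) (hb : ∀ a b t, Feasible p q r c a b t → b ≤ 0)
include hp hb

/-- The case where the shadow recedes only along the `a`-axis: the row `kf` of the shadow bounds
`b` below, then `k₀` bounds `a` below, and a violated row bounds `a` above. -/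
theorem bounded_violation_of_flat [Finite ι] {kf k₀ : ι ⊕ (ι × ι)} (hkf : FMAdmissible r kf)
    (hflat : fmRow r p kf = 0) (hkfq : fmRow r q kf < 0) (hk₀ : FMAdmissible r k₀)
    (hk₀p : fmRow r p k₀ < 0) (i : ι) :
    ∃ R, ∀ a b, (∃ t, Feasible p q r c a b t) →
      ¬ p i * a + q i * b + r i * (0 * b + 0) ≤ c i → |a| ≤ R ∧ |b| ≤ R := by
  by_cases hri : r i = 0
  · exact ⟨0, fun a b ⟨t, ht⟩ hv => absurd (ht.row_of_eq_zero hri _) hv⟩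
  set β := fmRow r c kf / fmRow r q kf
  set lo := (|fmRow r c k₀| + |fmRow r q k₀| * |β|) / fmRow r p k₀
  set hi := (c i - |q i| * |β|) / p i
  refine ⟨max |β| (max |lo| |hi|), fun a b hab hv => ?_⟩
  have hproj := exists_feasible_iff.1 hab
  obtain ⟨t, ht⟩ := hab
  have hb0 := hb a b t ht
  have hβb : β ≤ b := by
    have := hproj kf hkf
    rw [hflat, zero_mul, zero_add] at this
    exact (div_le_iff_of_neg' hkfq).2 this
  have habs : |b| ≤ |β| := (abs_le_abs_of_nonpos hb0 hβb)
  have hmul (x : ℝ) : |x * b| ≤ |x| * |β| :=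
    (abs_mul x b).trans_le (mul_le_mul_of_nonneg_left habs (abs_nonneg x))
  have hlo : lo ≤ a := by
    have := hproj k₀ hk₀
    refine (div_le_iff_of_neg' hk₀p).2 ?_
    linarith [le_abs_self (fmRow r c k₀), neg_abs_le (fmRow r q k₀ * b), hmul (fmRow r q k₀)]
  have hhi : a ≤ hi := by
    refine (le_div_iff_of_neg' (hp i hri)).2 ?_
    linarith [le_abs_self (q i * b), hmul (q i)]
  exact ⟨(abs_le_max_abs_abs hlo hhi).trans (le_max_right _ _), habs.trans (le_max_left _ _)⟩

/-- The case where `(xm, -1, y₂)` is a recession direction and `τ₀` bounds `τ = a + xm * b`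
below. A row violated at height `-y₂ * b + s` either vanishes on that direction, and then `hs`
forbids the violation, or it bounds `τ` above and `b` below. -/
theorem bounded_violation_of_sloped {xm y₂ τ₀ s : ℝ} (hy₂ : Feasible p q r 0 xm (-1) y₂)
    (hτ₀ : ∀ a b, (∃ t, Feasible p q r c a b t) → τ₀ ≤ a + xm * b)
    (hs : ∀ i, p i * xm + q i * (-1) + r i * y₂ = 0 → p i * τ₀ + r i * s ≤ c i) (i : ι) :
    ∃ R, ∀ a b, (∃ t, Feasible p q r c a b t) →
      ¬ p i * a + q i * b + r i * (-y₂ * b + s) ≤ c i → |a| ≤ R ∧ |b| ≤ R := by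
  by_cases hri : r i = 0
  · exact ⟨0, fun a b ⟨t, ht⟩ hv => absurd (ht.row_of_eq_zero hri _) hv⟩
  have hpi := hp i hri
  set Φ := p i * xm + q i * (-1) + r i * y₂
  have hrow (a b : ℝ) : p i * a + q i * b + r i * (-y₂ * b + s) =
      p i * (a + xm * b) + r i * s - b * Φ := by ring
  rcases (show Φ ≤ 0 from hy₂ i).lt_or_eq with hΦ | hΦ
  swap
  · refine ⟨0, fun a b hab hv => absurd ?_ hv⟩
    rw [hrow, hΦ]
    nlinarith [hs i hΦ, hτ₀ a b hab]
  set τ₁ := (c i - r i * s) / p i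
  set b₀ := (c i - r i * s - p i * τ₀) / -Φ
  refine ⟨max |τ₀| |τ₁| + |xm| * |b₀| + |b₀|, fun a b hab hv => ?_⟩
  rw [hrow, not_le] at hv
  have hτ := hτ₀ a b hab
  obtain ⟨t, ht⟩ := hab
  have hb0 := hb a b t ht
  have hτ₁ : a + xm * b ≤ τ₁ := (le_div_iff_of_neg' hpi).2 (by nlinarith)
  have hb₀ : b₀ ≤ b := (div_le_iff₀ (neg_pos.2 hΦ)).2 (by nlinarith)
  have hbabs : |b| ≤ |b₀| := abs_le_abs_of_nonpos hb0 hb₀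
  have hτabs := abs_le_max_abs_abs hτ hτ₁
  have haabs : |a| ≤ |a + xm * b| + |xm| * |b| := by
    calc |a| = |(a + xm * b) - xm * b| := by ring_nf
      _ ≤ |a + xm * b| + |xm * b| := abs_sub _ _
      _ = |a + xm * b| + |xm| * |b| := by rw [abs_mul]
  have := mul_le_mul_of_nonneg_left hbabs (abs_nonneg xm)
  have := mul_nonneg (abs_nonneg xm) (abs_nonneg b₀)
  have := (abs_nonneg τ₀).trans (le_max_left |τ₀| |τ₁|)
  exact ⟨by linarith [abs_nonneg b₀], by linarith⟩

theorem exists_shear_of_sloped [Finite ι] (hA : ∀ k, FMAdmissible r k → fmRow r p k ≤ 0)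
    (hk₀ : ∃ k, FMAdmissible r k ∧ fmRow r p k < 0)
    (hD : ∃ x, ∀ k, FMAdmissible r k → fmRow r p k * x ≤ fmRow r q k) :
    ∃ ω₁ ω₂, ∀ i, ∃ R, ∀ a b, (∃ t, Feasible p q r c a b t) →
      ¬ p i * a + q i * b + r i * (ω₁ * b + ω₂) ≤ c i → |a| ≤ R ∧ |b| ≤ R := by
  obtain ⟨xm, ⟨ks, hks⟩, hAks, htight, hxm⟩ :=
    exists_tight_of_nonpos (κ := {k // FMAdmissible r k}) (A := fun k => fmRow r p k)
      (B := fun k => fmRow r q k) (fun k => hA k k.2)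
      (let ⟨k, hk, hk'⟩ := hk₀; ⟨⟨k, hk⟩, hk'⟩) (let ⟨x, hx⟩ := hD; ⟨x, fun k => hx k k.2⟩)
  obtain ⟨y₂, hy₂⟩ : ∃ z, Feasible p q r 0 xm (-1) z :=
    exists_feasible_iff.2 fun k hk => by simpa [fmRow_zero] using hxm ⟨k, hk⟩
  set TS := {τ | ∃ a b, (∃ t, Feasible p q r c a b t) ∧ τ = a + xm * b}
  have hTS : BddBelow TS := by
    refine ⟨fmRow r c ks / fmRow r p ks, ?_⟩
    rintro _ ⟨a, b, hab, rfl⟩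
    refine (div_le_iff_of_neg' hAks).2 ?_
    have := exists_feasible_iff.1 hab ks hks
    simp only at htight
    rw [mul_add, ← mul_assoc, htight]
    linarith
  rcases TS.eq_empty_or_nonempty with hempty | hne
  · exact ⟨0, 0, fun _ => ⟨0, fun a b hab _ =>
      absurd (show a + xm * b ∈ TS from ⟨a, b, hab, rfl⟩) (hempty ▸ Set.notMem_empty _)⟩⟩
  obtain ⟨s, hs⟩ := exists_offset_of_mem_closure (y₂ := y₂) (csInf_mem_closure hne hTS)
  exact ⟨-y₂, s, bounded_violation_of_sloped hp hb hy₂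
    (fun a b hab => csInf_le hTS ⟨a, b, hab, rfl⟩) hs⟩

end Cases

theorem exists_shear_bounded_violation [Finite ι] (hpos : ∃ i, 0 < r i) (hneg : ∃ i, r i < 0)
    {ξ₁ θ₁ ξ₂ θ₂ : ℝ} (hξ₁ : 0 < ξ₁) (hθ₁ : 0 < θ₁) (hξ₂ : 0 < ξ₂) (hθ₂ : θ₂ < 0)
    (h₁ : Feasible p q r 0 ξ₁ 0 θ₁) (h₂ : Feasible p q r 0 ξ₂ 0 θ₂)
    (hb : ∀ a b t, Feasible p q r c a b t → b ≤ 0) :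
    ∃ ω₁ ω₂ R, ∀ a b, (∃ t, Feasible p q r c a b t) →
      ¬ Feasible p q r c a b (ω₁ * b + ω₂) → |a| ≤ R ∧ |b| ≤ R := by
  have hp i (hi : r i ≠ 0) := neg_of_rays hξ₁ hθ₁ hξ₂ hθ₂ h₁ h₂ hi
  have hA k (hk : FMAdmissible r k) := fmRow_nonpos (nonpos_of_rays hξ₁ hθ₁ hξ₂ hθ₂ h₁ h₂) hk
  obtain ⟨k₀, hk₀, hk₀p⟩ := exists_fmRow_neg_of_rays hξ₁ hθ₁ hξ₂ hθ₂ h₁ h₂ hpos hneg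
  suffices ∃ ω₁ ω₂, ∀ i, ∃ R, ∀ a b, (∃ t, Feasible p q r c a b t) →
      ¬ p i * a + q i * b + r i * (ω₁ * b + ω₂) ≤ c i → |a| ≤ R ∧ |b| ≤ R by
    obtain ⟨ω₁, ω₂, h⟩ := this
    exact ⟨ω₁, ω₂, exists_bound_of_forall_row h⟩
  by_cases hD : ∃ x, ∀ k, FMAdmissible r k → fmRow r p k * x ≤ fmRow r q k
  · exact exists_shear_of_sloped hp hb hA ⟨k₀, hk₀, hk₀p⟩ hD
  · obtain ⟨⟨kf, hkf⟩, hflat, hkfq⟩ :=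
      exists_eq_zero_and_neg_of_not_exists (κ := {k // FMAdmissible r k})
        (A := fun k => fmRow r p k) (B := fun k => fmRow r q k) (fun k => hA k k.2)
        fun ⟨x, hx⟩ => hD ⟨x, fun k hk => hx ⟨k, hk⟩⟩
    exact ⟨0, 0, bounded_violation_of_flat hp hb hkf hflat hkfq hk₀ hk₀p⟩

end Trimming

section Shadow

theorem isBounded_of_forall_abs_le {n : ℕ} {s : Set (Fin n → ℝ)} (R : ℝ)
    (h : ∀ x ∈ s, ∀ j, |x j| ≤ R) : IsBounded s :=
  forall_isBounded_image_eval_iff.1 fun j =>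
    (Metric.isBounded_Icc (-R) R).subset <| by
      rintro _ ⟨x, hx, rfl⟩
      exact abs_le.1 (h x hx j)

theorem isBounded_setOf_forall_add_mul_le {ι : Type*} [Finite ι] {v r c : ι → ℝ}
    (hpos : ∃ i, 0 < r i) (hneg : ∃ i, r i < 0) :
    IsBounded {t | ∀ i, v i + r i * t ≤ c i} := by
  obtain ⟨i, hi⟩ := hpos
  obtain ⟨j, hj⟩ := hneg
  refine BddBelow.isBounded ⟨(c j - v j) / r j, fun t ht => ?_⟩ ⟨(c i - v i) / r i, fun t ht => ?_⟩
  · exact (div_le_iff_of_neg' hj).2 (by linarith [ht j])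
  · exact (le_div_iff₀' hi).2 (by linarith [ht i])

theorem projLast_three_eq_iff {x y : Fin 3 → ℝ} :
    projLast 3 x = y ↔ x 0 = y 0 ∧ x 1 = y 1 ∧ y 2 = 0 := by
  simp [funext_iff, Fin.forall_fin_succ, projLast, eq_comm]

variable {ι : Type*} {p q r c : ι → ℝ} {ω₁ ω₂ : ℝ}

theorem isBounded_fiber_inter_feasible [Finite ι] (hpos : ∃ i, 0 < r i) (hneg : ∃ i, r i < 0)
    (y : Fin 3 → ℝ) :
    IsBounded ({x | projLast 3 x = y} ∩
      {x | Feasible p q r c (x 0) (x 1) (ω₁ * x 1 + ω₂ + x 2)}) := by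
  obtain ⟨R, hR⟩ := isBounded_iff_forall_norm_le.1 <|
    isBounded_setOf_forall_add_mul_le (c := c) (hpos := hpos) (hneg := hneg)
      (v := fun i => p i * y 0 + q i * y 1 + r i * (ω₁ * y 1 + ω₂))
  refine isBounded_of_forall_abs_le (max (max |y 0| |y 1|) R) fun x ⟨hx, hK⟩ j => ?_
  obtain ⟨h0, h1, -⟩ := projLast_three_eq_iff.1 hx
  fin_cases j
  · simp [h0]
  · simp [h1]
  · refine (hR (x 2) fun i => ?_).trans (le_max_right _ _)
    have := hK i
    rw [h0, h1] at this
    linarith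

theorem isBounded_AKset_of_bound {R : ℝ}
    (hR : ∀ a b, (∃ t, Feasible p q r c a b t) → ¬ Feasible p q r c a b (ω₁ * b + ω₂) →
      |a| ≤ R ∧ |b| ≤ R) :
    IsBounded (AKset 3 {x | Feasible p q r c (x 0) (x 1) (ω₁ * x 1 + ω₂ + x 2)}) := by
  refine isBounded_of_forall_abs_le (max R 0) fun y ⟨_, ⟨x, hx, hK⟩, hy⟩ j => ?_
  obtain ⟨h0, h1, h2⟩ := projLast_three_eq_iff.1 hx
  have hK : Feasible p q r c (y 0) (y 1) (ω₁ * y 1 + ω₂ + x 2) := h0 ▸ h1 ▸ hK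
  have hy : ¬ Feasible p q r c (y 0) (y 1) (ω₁ * y 1 + ω₂) := by simpa [h2] using hy
  obtain ⟨ha, hb⟩ := hR _ _ ⟨_, hK⟩ hy
  fin_cases j
  · exact ha.trans (le_max_left _ _)
  · exact hb.trans (le_max_left _ _)
  · simp [h2]

end Shadow

section AffineCoordinates

theorem linearIndependent_three_of_ker {V : Type*} [AddCommGroup V] [Module ℝ V]
    {Λ : V →ₗ[ℝ] ℝ} {e β u : V} (he : Λ e = 0) (hβ : Λ β ≠ 0) (hu : Λ u = 0)
    (heu : LinearIndependent ℝ ![e, u]) : LinearIndependent ℝ ![e, β, u] := by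
  refine Fintype.linearIndependent_iff.2 fun g hg => ?_
  simp only [Fin.sum_univ_three, Matrix.cons_val_zero, Matrix.cons_val_one,
    Matrix.cons_val_two, Matrix.head_cons, Matrix.tail_cons] at hg
  have h1 : g 1 = 0 := by simpa [he, hu, hβ] using congrArg Λ hg
  rw [h1, zero_smul, add_zero] at hg
  obtain ⟨h0, h2⟩ := LinearIndependent.pair_iff.1 heu _ _ hg
  intro i
  fin_cases i <;> assumption

theorem exists_affineEquiv_symm_apply {n : ℕ} [NeZero n] {f : Fin n → Fin n → ℝ}
    (hf : LinearIndependent ℝ f) (o : Fin n → ℝ) :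
    ∃ T : (Fin n → ℝ) ≃ᵃ[ℝ] (Fin n → ℝ), ∀ y, T.symm y = o + ∑ i, y i • f i := by
  set B := basisOfLinearIndependentOfCardEqFinrank hf (by simp)
  refine ⟨(AffineEquiv.constVAdd ℝ _ (-o)).trans B.equivFun.toAffineEquiv, fun y => ?_⟩
  rw [AffineEquiv.symm_apply_eq, AffineEquiv.trans_apply, AffineEquiv.constVAdd_apply, vadd_eq_add,
    neg_add_cancel_left, LinearEquiv.coe_toAffineEquiv]
  have hB : ∀ i, B i = f i := congrFun (coe_basisOfLinearIndependentOfCardEqFinrank hf _)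
  simp_rw [← hB, ← Module.Basis.equivFun_symm_apply, LinearEquiv.apply_symm_apply]

theorem linearIndependent_add_sub {V : Type*} [AddCommGroup V] [Module ℝ V] {v₁ v₂ : V}
    (hv : LinearIndependent ℝ ![v₁, v₂]) (s : ℝ) :
    LinearIndependent ℝ ![v₁ + v₂, s • v₁ - (1 - s) • v₂] := by
  refine LinearIndependent.pair_iff.2 fun x y hxy => ?_
  have : (x + y * s) • v₁ + (x - y * (1 - s)) • v₂ = 0 := by rw [← hxy]; module
  obtain ⟨h₁, h₂⟩ := LinearIndependent.pair_iff.1 hv _ _ this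
  have hy : y = 0 := by linear_combination h₁ - h₂
  exact ⟨by simpa [hy] using h₁, hy⟩

end AffineCoordinates

section Faces

variable {n : ℕ} {K F : Set (Fin n → ℝ)}

theorem IsFaceOf.image (h : IsFaceOf n K F) (T : (Fin n → ℝ) ≃ᵃ[ℝ] (Fin n → ℝ)) :
    IsFaceOf n (T '' K) (T '' F) := by
  obtain ⟨L, c, hL, hne, hle, rfl⟩ := h
  set L' := L ∘ₗ T.symm.linear.toLinearMap
  have key (y : Fin n → ℝ) : L' y = L (T.symm y) - L (T.symm 0) := by
    rw [LinearMap.comp_apply, ← map_sub]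
    exact congrArg L (congrFun (AffineMap.decomp' T.symm.toAffineMap) y)
  refine ⟨L', c - L (T.symm 0), fun h0 => hL (LinearMap.ext fun x => ?_), ?_, ?_, ?_⟩
  · simpa [L'] using LinearMap.congr_fun h0 (T.linear x)
  · obtain ⟨x, hx⟩ := hne
    refine ⟨T x, ⟨x, hx.1, rfl⟩, ?_⟩
    rw [Set.mem_ofPred_eq, key, T.symm_apply_apply, hx.2]
  · rintro _ ⟨x, hx, rfl⟩
    rw [key, T.symm_apply_apply]
    linarith [hle x hx]
  · simp only [← T.preimage_symm, Set.preimage_inter]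
    ext y
    simp only [Set.mem_inter_iff, Set.mem_preimage, Set.mem_ofPred_eq, key, sub_left_inj]

theorem polyDim_image (T : (Fin n → ℝ) ≃ᵃ[ℝ] (Fin n → ℝ)) (S : Set (Fin n → ℝ)) :
    polyDim n (T '' S) = polyDim n S := by
  rw [polyDim, polyDim, ← T.coe_toAffineMap, ← AffineSubspace.map_span,
    AffineSubspace.map_direction]
  exact T.linear.finrank_map_eq _

theorem IsFacetOf.image (h : IsFacetOf n K F) (T : (Fin n → ℝ) ≃ᵃ[ℝ] (Fin n → ℝ)) :
    IsFacetOf n (T '' K) (T '' F) :=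
  ⟨h.1.image T, by rw [polyDim_image, polyDim_image, h.2]⟩

theorem IsVertexOf.mem {q : Fin n → ℝ} (hq : IsVertexOf n K q) : q ∈ K := by
  obtain ⟨L, c, -, -, -, hface⟩ := hq
  exact (hface ▸ rfl : q ∈ K ∩ {x | L x = c}).1

theorem IsVertexOf.eq_zero_of_add_mem_of_sub_mem {q w : Fin n → ℝ} (hq : IsVertexOf n K q)
    (hadd : q + w ∈ K) (hsub : q - w ∈ K) : w = 0 := by
  obtain ⟨L, c, -, -, hle, hface⟩ := hq
  have hq : q ∈ K ∩ {x | L x = c} := hface ▸ rfl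
  have h₁ := hle _ hadd
  have h₂ := hle _ hsub
  rw [map_add, hq.2] at h₁
  rw [map_sub, hq.2] at h₂
  have : q + w ∈ K ∩ {x | L x = c} := ⟨hadd, by rw [Set.mem_ofPred_eq, map_add, hq.2]; linarith⟩
  rw [← hface] at this
  simpa using this

end Faces

section Edges

variable {n m : ℕ} {L : Fin m → (Fin n → ℝ) →ₗ[ℝ] ℝ} {c : Fin m → ℝ}

theorem IsUnboundedEdgeWithDir.exists_vertex_of_subset {Λ : (Fin n → ℝ) →ₗ[ℝ] ℝ} {d : ℝ}
    {A : Set (Fin n → ℝ)} {v : Fin n → ℝ}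
    (hA : IsUnboundedEdgeWithDir n {x | ∀ i, L i x ≤ c i} A v)
    (hAF : A ⊆ {x | ∀ i, L i x ≤ c i} ∩ {x | Λ x = d}) :
    ∃ q, IsVertexOf n {x | ∀ i, L i x ≤ c i} q ∧ Λ v = 0 ∧ ∀ i, L i v ≤ 0 := by
  obtain ⟨-, -, -, q, hq, rfl⟩ := hA
  have hray (t : ℝ) (ht : 0 ≤ t) := hAF ⟨t, ht, rfl⟩
  refine ⟨q, hq, ?_, fun i => nonpos_of_forall_add_mul_le (a := L i q) (c := c i) fun t ht => ?_⟩
  · have h0 := (hray 0 le_rfl).2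
    have h1 := (hray 1 zero_le_one).2
    simp only [Set.mem_ofPred_eq, map_add, map_smul, smul_eq_mul] at h0 h1
    linarith
  · simpa using (hray t ht).1 i

/-- Some direction `s • v₁ - (1 - s) • v₂` leaves the recession cone both forwards and
backwards: the sets of `s ∈ [0, 1]` where it points into the cone, resp. out of its negative,
are closed, contain `1`, resp. `0`, and cannot meet, as the cone contains no line. -/
theorem exists_mixed_sign_of_linearIndependent {V : Type*} [AddCommGroup V] [Module ℝ V]
    {ι : Type*} {L : ι → V →ₗ[ℝ] ℝ} {v₁ v₂ : V} (hv : LinearIndependent ℝ ![v₁, v₂])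
    (h₁ : ∀ i, L i v₁ ≤ 0) (h₂ : ∀ i, L i v₂ ≤ 0) (hpt : ∀ w, (∀ i, L i w = 0) → w = 0) :
    ∃ s ∈ Set.Ioo (0 : ℝ) 1, (∃ i, 0 < L i (s • v₁ - (1 - s) • v₂)) ∧
      ∃ i, L i (s • v₁ - (1 - s) • v₂) < 0 := by
  have hL (i : ι) (s : ℝ) : L i (s • v₁ - (1 - s) • v₂) = s * L i v₁ - (1 - s) * L i v₂ := by
    simp
  by_contra! h
  let S₁ := ⋂ i, {s : ℝ | s * L i v₁ - (1 - s) * L i v₂ ≤ 0}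
  let S₂ := ⋂ i, {s : ℝ | 0 ≤ s * L i v₁ - (1 - s) * L i v₂}
  have hcover : Set.Icc (0 : ℝ) 1 ⊆ S₁ ∪ S₂ := by
    intro s hs
    rcases hs.1.eq_or_lt with rfl | hs0
    · exact .inr (Set.mem_iInter.2 fun i => by simp [h₂ i])
    rcases hs.2.lt_or_eq with hs1 | rfl
    · by_cases hpos : ∃ i, 0 < L i (s • v₁ - (1 - s) • v₂)
      · exact .inr (Set.mem_iInter.2 fun i => by simpa [hL] using h s ⟨hs0, hs1⟩ hpos i)
      · simp only [not_exists, not_lt] at hpos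
        exact .inl (Set.mem_iInter.2 fun i => by simpa [hL] using hpos i)
    · exact .inl (Set.mem_iInter.2 fun i => by simp [h₁ i])
  have hclosed₁ : IsClosed S₁ := isClosed_iInter fun i => isClosed_le (by fun_prop) (by fun_prop)
  have hclosed₂ : IsClosed S₂ := isClosed_iInter fun i => isClosed_le (by fun_prop) (by fun_prop)
  obtain ⟨s, -, hs₁, hs₂⟩ := isPreconnected_closed_iff.1 isPreconnected_Icc S₁ S₂
    hclosed₁ hclosed₂ hcover ⟨1, by simp, Set.mem_iInter.2 fun i => by simp [h₁ i]⟩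
    ⟨0, by simp, Set.mem_iInter.2 fun i => by simp [h₂ i]⟩
  have hzero := hpt (s • v₁ - (1 - s) • v₂) fun i => by
    rw [hL]
    exact le_antisymm (Set.mem_iInter.1 hs₁ i) (Set.mem_iInter.1 hs₂ i)
  rw [sub_eq_add_neg, ← neg_smul] at hzero
  obtain ⟨rfl, h1⟩ := LinearIndependent.pair_iff.1 hv _ _ hzero
  norm_num at h1

end Edges

section Placement

theorem feasible_iff_map_le {m : ℕ} {V : Type*} [AddCommGroup V] [Module ℝ V]
    (L : Fin m → V →ₗ[ℝ] ℝ) (c : Fin m → ℝ) (o e nv u : V) (a b t : ℝ) :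
    Feasible (fun i => L i e) (fun i => L i nv) (fun i => L i u) (fun i => c i - L i o) a b t ↔
      ∀ i, L i (o + a • e + b • nv + t • u) ≤ c i := by
  refine forall_congr' fun i => ?_
  simp only [map_add, map_smul, smul_eq_mul]
  constructor <;> intro h <;> linarith

theorem exists_affineEquiv_trimming {m : ℕ} {L : Fin m → (Fin 3 → ℝ) →ₗ[ℝ] ℝ} {c : Fin m → ℝ}
    {Λ : (Fin 3 → ℝ) →ₗ[ℝ] ℝ} {d : ℝ} (hΛ : Λ ≠ 0) (hΛK : ∀ x, (∀ i, L i x ≤ c i) → Λ x ≤ d)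
    {v₁ v₂ : Fin 3 → ℝ} (hv : LinearIndependent ℝ ![v₁, v₂]) (hΛv₁ : Λ v₁ = 0)
    (hΛv₂ : Λ v₂ = 0) (hLv₁ : ∀ i, L i v₁ ≤ 0) (hLv₂ : ∀ i, L i v₂ ≤ 0) {s : ℝ}
    (hs : s ∈ Set.Ioo 0 1) (hpos : ∃ i, 0 < L i (s • v₁ - (1 - s) • v₂))
    (hneg : ∃ i, L i (s • v₁ - (1 - s) • v₂) < 0) :
    ∃ T : (Fin 3 → ℝ) ≃ᵃ[ℝ] (Fin 3 → ℝ), (∀ x, T x 1 = Λ x - d) ∧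
      (∀ y, IsBounded ({x | projLast 3 x = y} ∩ T '' {x | ∀ i, L i x ≤ c i})) ∧
      IsBounded (AKset 3 (T '' {x | ∀ i, L i x ≤ c i})) := by
  set e := v₁ + v₂
  set u := s • v₁ - (1 - s) • v₂
  have hΛe : Λ e = 0 := by simp [e, hΛv₁, hΛv₂]
  have hΛu : Λ u = 0 := by simp [u, hΛv₁, hΛv₂]
  obtain ⟨nv, hnv⟩ := LinearMap.surjective_of_ne_zero hΛ 1
  let p i := L i e
  let q i := L i nv
  let r i := L i u
  let c' i := c i - L i (d • nv)
  have hb (a b t : ℝ) (h : Feasible p q r c' a b t) : b ≤ 0 := by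
    have := hΛK _ ((feasible_iff_map_le L c (d • nv) e nv u a b t).1 h)
    simp only [map_add, map_smul, smul_eq_mul, hnv, hΛe, hΛu] at this
    linarith
  have hray {ξ θ : ℝ} {w : Fin 3 → ℝ} (hw : w = ξ • e + θ • u) (hLw : ∀ i, L i w ≤ 0) :
      Feasible p q r 0 ξ 0 θ := fun i => by
    simpa [hw, mul_comm] using hLw i
  obtain ⟨ω₁, ω₂, R, hR⟩ := exists_shear_bounded_violation (r := r) hpos hneg
    (sub_pos.2 hs.2) one_pos hs.1 neg_one_lt_zero (hray (by module) hLv₁) (hray (by module) hLv₂) hb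
  obtain ⟨T, hT⟩ := exists_affineEquiv_symm_apply (linearIndependent_three_of_ker hΛe
    (β := nv + ω₁ • u) (by simp [hnv, hΛu]) hΛu (linearIndependent_add_sub hv s)) (d • nv + ω₂ • u)
  have hsymm (y : Fin 3 → ℝ) :
      T.symm y = d • nv + y 0 • e + y 1 • nv + (ω₁ * y 1 + ω₂ + y 2) • u := by
    rw [hT, Fin.sum_univ_three]
    simp only [Matrix.cons_val_zero, Matrix.cons_val_one, Matrix.cons_val_two, Matrix.head_cons,
      Matrix.tail_cons]
    module
  have hTK : T '' {x | ∀ i, L i x ≤ c i} =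
      {y | Feasible p q r c' (y 0) (y 1) (ω₁ * y 1 + ω₂ + y 2)} := by
    ext y
    rw [← T.preimage_symm, Set.mem_preimage, Set.mem_ofPred_eq, hsymm, Set.mem_ofPred_eq,
      feasible_iff_map_le]
  refine ⟨T, fun x => ?_, hTK ▸ isBounded_fiber_inter_feasible hpos hneg,
    hTK ▸ isBounded_AKset_of_bound hR⟩
  have := congrArg Λ (hsymm (T x))
  simp only [T.symm_apply_apply, map_add, map_smul, smul_eq_mul, hnv, hΛe, hΛu] at this
  linarith

end Placement

theorem placed_first_trimming_of_facet_with_nonparallel_unbounded_edges_general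
    (K F : Set (Fin 3 → ℝ)) (hpoly : IsConvexPolyhedron 3 K)
    (hF : IsFacetOf 3 K F)
    (hedges : ∃ (A₁ A₂ : Set (Fin 3 → ℝ)) (v₁ v₂ : Fin 3 → ℝ),
      IsUnboundedEdgeWithDir 3 K A₁ v₁ ∧ IsUnboundedEdgeWithDir 3 K A₂ v₂ ∧
      A₁ ⊆ F ∧ A₂ ⊆ F ∧ LinearIndependent ℝ ![v₁, v₂]) :
    ∃ T : (Fin 3 → ℝ) ≃ᵃ[ℝ] (Fin 3 → ℝ),
      FirstTrimmingPosition 3 (T '' K) (T '' F) := by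
  obtain ⟨m, L, c, -, rfl⟩ := hpoly
  obtain ⟨A₁, A₂, v₁, v₂, hE₁, hE₂, hA₁, hA₂, hv⟩ := hedges
  obtain ⟨Λ, d, hΛ, -, hΛK, rfl⟩ := id hF.1
  obtain ⟨q, hq, hΛv₁, hLv₁⟩ := hE₁.exists_vertex_of_subset hA₁
  obtain ⟨-, -, hΛv₂, hLv₂⟩ := hE₂.exists_vertex_of_subset hA₂
  have hpt (w : Fin 3 → ℝ) (hw : ∀ i, L i w = 0) : w = 0 :=
    hq.eq_zero_of_add_mem_of_sub_mem (fun i => by simpa [hw] using hq.mem i)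
      (fun i => by simpa [hw] using hq.mem i)
  obtain ⟨s, hs, hpos, hneg⟩ := exists_mixed_sign_of_linearIndependent hv hLv₁ hLv₂ hpt
  obtain ⟨T, hT, hfiber, hAK⟩ :=
    exists_affineEquiv_trimming hΛ hΛK hv hΛv₁ hΛv₂ hLv₁ hLv₂ hs hpos hneg
  refine ⟨T, hF.image T, ?_, ?_, hfiber, hAK⟩
  · rintro _ ⟨x, hx, rfl⟩ i hi
    obtain rfl : i = 1 := Fin.ext hi
    rw [hT, hx.2, sub_self]
  · rintro _ ⟨x, hx, rfl⟩ i hi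
    obtain rfl : i = 1 := Fin.ext hi
    rw [hT, sub_nonpos]
    exact hΛK x hx

/-- Proposition 1 (i): a non-degenerate 3-dimensional unbounded convex polyhedron can
be placed in first trimming position with respect to any facet having two unbounded
edges with linearly independent directions. -/
theorem placed_first_trimming_of_facet_with_nonparallel_unbounded_edges
    (K F : Set (Fin 3 → ℝ)) (hpoly : IsConvexPolyhedron 3 K)
    (hdim : polyDim 3 K = 3) (hunb : ¬ IsBounded K)
    (hnd : ∃ p, IsVertexOf 3 K p) (hF : IsFacetOf 3 K F)
    (hedges : ∃ (A₁ A₂ : Set (Fin 3 → ℝ)) (v₁ v₂ : Fin 3 → ℝ),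
      IsUnboundedEdgeWithDir 3 K A₁ v₁ ∧ IsUnboundedEdgeWithDir 3 K A₂ v₂ ∧
      A₁ ⊆ F ∧ A₂ ⊆ F ∧ LinearIndependent ℝ ![v₁, v₂]) :
    ∃ T : (Fin 3 → ℝ) ≃ᵃ[ℝ] (Fin 3 → ℝ),
      FirstTrimmingPosition 3 (T '' K) (T '' F) :=
  placed_first_trimming_of_facet_with_nonparallel_unbounded_edges_general K F hpoly hF hedges
end

section
/- Let K ⊂ ℝ³ be a non-degenerate 3-dimensional unbounded convex polyhedron and let F be a facet of K containing two unbounded edges of K whose direction vectors are linearly independent. Then K can be placed in second trimming position with respect to F. -/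
open Bornology Pointwise

/-!
Write `F = K ∩ {ℓ = c₀}`. The edge directions are recession directions of `K` spanning `ker ℓ`,
so each defining inequality `Lᵢ ≤ cᵢ` of `K` is either constant on the plane of `F` or strictly
decreasing along their sum `v`. Shearing any `w` with `ℓ w = 1` by a large multiple of `v` gives
`u` with `ℓ u = 1` along which every non-constant `Lᵢ` is nonincreasing. In affine coordinates
whose last coordinate is `ℓ - c₀` and whose last basis vector is `u`, the projection `π_n` sends
`x ∈ K` to `x + (c₀ - ℓ x) • u`, which lies in the plane of `F` and still satisfies every
`Lᵢ ≤ cᵢ`. Hence `A_K` is empty.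
-/

open Filter Module Submodule

lemma Module.Dual.ker_eq_span_of_linearIndependent {K V : Type*} [Field K] [AddCommGroup V]
    [Module K V] [FiniteDimensional K V] {n : ℕ} (hV : finrank K V = n + 1) {f : Dual K V}
    (hf : f ≠ 0) {v : Fin n → V} (hv : LinearIndependent K v) (hfv : ∀ j, f (v j) = 0) :
    LinearMap.ker f = span K (Set.range v) := by
  refine (eq_of_le_of_finrank_eq (span_le.2 (Set.range_subset_iff.2 hfv)) ?_).symm
  have := Dual.finrank_ker_add_one_of_ne_zero hf
  rw [finrank_span_eq_card hv, Fintype.card_fin]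
  omega

section Polyhedron

variable {E : Type*} [AddCommGroup E] [Module ℝ E]

lemma LinearMap.map_nonpos_of_forall_map_add_smul_le (ℓ : E →ₗ[ℝ] ℝ) {p v : E} {c : ℝ}
    (h : ∀ t : ℝ, 0 ≤ t → ℓ (p + t • v) ≤ c) : ℓ v ≤ 0 := by
  by_contra! hv
  obtain ⟨t, ht₀, ht⟩ := ((eventually_ge_atTop 0).and ((tendsto_atTop_add_const_left _ (ℓ p)
    (tendsto_id.atTop_mul_const hv)).eventually_gt_atTop c)).exists
  exact (h t ht₀).not_gt (by simpa using ht)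

variable {ι : Type*} (L : ι → E →ₗ[ℝ] ℝ)

lemma exists_forall_map_add_smul_nonpos [Finite ι] (w v : E) :
    ∃ t : ℝ, ∀ i, L i v < 0 → L i (w + t • v) ≤ 0 := by
  refine (eventually_all.2 fun i => ?_).exists (f := atTop)
  by_cases hi : L i v < 0
  · filter_upwards [(tendsto_atBot_add_const_left _ (L i w)
      (tendsto_id.atTop_mul_const_of_neg hi)).eventually_le_atBot 0] with t ht _
    simpa [mul_comm] using ht
  · exact Eventually.of_forall fun _ h => absurd h hi

lemma exists_map_eq_one_and_map_nonpos_or_forall_eq_zero [Finite ι] [FiniteDimensional ℝ E]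
    {n : ℕ} (hE : finrank ℝ E = n + 1) {ℓ : Dual ℝ E} (hℓ : ℓ ≠ 0) {v : Fin n → E}
    (hv : LinearIndependent ℝ v) (hℓv : ∀ j, ℓ (v j) = 0) (hLv : ∀ i j, L i (v j) ≤ 0) :
    ∃ u, ℓ u = 1 ∧ ∀ i, L i u ≤ 0 ∨ ∀ w ∈ LinearMap.ker ℓ, L i w = 0 := by
  obtain ⟨w, hw⟩ := LinearMap.surjective hℓ 1
  obtain ⟨t, ht⟩ := exists_forall_map_add_smul_nonpos L w (∑ j, v j)
  refine ⟨w + t • ∑ j, v j, by simp [hw, hℓv], fun i => ?_⟩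
  by_cases hi : ∀ j, L i (v j) = 0
  · right
    rw [Dual.ker_eq_span_of_linearIndependent hE hℓ hv hℓv]
    exact fun x hx => span_le (p := LinearMap.ker (L i)).2 (Set.range_subset_iff.2 hi) hx
  · left
    obtain ⟨j, hj⟩ := not_forall.1 hi
    refine ht i ?_
    rw [map_sum]
    exact Finset.sum_neg' (fun j _ => hLv i j) ⟨j, Finset.mem_univ j, (hLv i j).lt_of_ne hj⟩

lemma add_smul_mem_of_map_nonpos (c : ι → ℝ) {W : Submodule ℝ E} {q u x : E} {s : ℝ}
    (hq : ∀ i, L i q ≤ c i) (hu : ∀ i, L i u ≤ 0 ∨ ∀ w ∈ W, L i w = 0)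
    (hx : ∀ i, L i x ≤ c i) (hs : 0 ≤ s) (hW : x + s • u - q ∈ W) :
    ∀ i, L i (x + s • u) ≤ c i := by
  intro i
  rcases hu i with hi | hi
  · rw [map_add, map_smul, smul_eq_mul]
    linarith [hx i, mul_nonpos_of_nonneg_of_nonpos hs hi]
  · have := hi _ hW
    rw [map_sub] at this
    linarith [hq i]

end Polyhedron

lemma projLast_succ (n : ℕ) (y : Fin (n + 1) → ℝ) :
    projLast (n + 1) y = y - y (Fin.last n) • Pi.single (Fin.last n) 1 := by
  ext i
  by_cases hi : i = Fin.last n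
  · subst hi
    simp [projLast]
  · have : (i : ℕ) ≠ n := fun h => hi (Fin.ext h)
    simp [projLast, this, hi]

lemma exists_affineEquiv_apply_last {E : Type*} [AddCommGroup E] [Module ℝ E]
    [FiniteDimensional ℝ E] {n : ℕ} (hE : finrank ℝ E = n + 1) {ℓ : Dual ℝ E} {u : E}
    (hu : ℓ u = 1) (c₀ : ℝ) :
    ∃ T : E ≃ᵃ[ℝ] (Fin (n + 1) → ℝ), ∀ x,
      T x (Fin.last n) = ℓ x - c₀ ∧ T.symm (projLast (n + 1) (T x)) = x + (c₀ - ℓ x) • u := by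
  have hℓ : ℓ ≠ 0 := by rintro rfl; simp at hu
  let e := finBasisOfFinrankEq ℝ (LinearMap.ker ℓ) (n := n)
    (by have := Dual.finrank_ker_add_one_of_ne_zero hℓ; omega)
  have hind :
      LinearIndependent ℝ (Fin.snoc ((LinearMap.ker ℓ).subtype ∘ e) u : Fin (n + 1) → E) := by
    refine linearIndependent_finSnoc.2 ⟨e.linearIndependent.map' _ (ker_subtype _), fun hmem => ?_⟩
    have : u ∈ LinearMap.ker ℓ := span_le.2 (by rintro _ ⟨j, rfl⟩; exact (e j).2) hmem
    simp [hu] at this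
  let b := basisOfLinearIndependentOfCardEqFinrank hind (by simp [hE])
  have hb : ⇑b = Fin.snoc ((LinearMap.ker ℓ).subtype ∘ e) u :=
    coe_basisOfLinearIndependentOfCardEqFinrank hind _
  have hcoord : b.coord (Fin.last n) = ℓ := by
    refine b.ext (Fin.lastCases ?_ fun j => ?_)
    · rw [Basis.coord_apply, b.repr_self]
      simp [hb, hu]
    · rw [Basis.coord_apply, b.repr_self]
      simp [hb, Fin.castSucc_ne_last]
  let T := (AffineEquiv.vaddConst ℝ (c₀ • u)).symm.trans b.equivFun.toAffineEquiv
  have hT_symm (y : Fin (n + 1) → ℝ) : T.symm y = b.equivFun.symm y + c₀ • u := rfl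
  have hT_last (x : E) : T x (Fin.last n) = ℓ x - c₀ := by
    simp [T, ← b.coord_apply, hcoord, hu]
  have hsingle : b.equivFun.symm (Pi.single (Fin.last n) 1) = u := by
    simp [hb]
  refine ⟨T, fun x => ⟨hT_last x, ?_⟩⟩
  calc T.symm (projLast (n + 1) (T x))
      = T.symm (T x) - T x (Fin.last n) • b.equivFun.symm (Pi.single (Fin.last n) 1) := by
        rw [hT_symm, hT_symm, projLast_succ, map_sub, map_smul]
        abel
    _ = x + (c₀ - ℓ x) • u := by
        rw [T.symm_apply_apply, hsingle, hT_last]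
        module

section AffineImage

variable {n : ℕ} (T : (Fin n → ℝ) ≃ᵃ[ℝ] (Fin n → ℝ))

lemma polyDim_image_affineEquiv (S : Set (Fin n → ℝ)) : polyDim n (T '' S) = polyDim n S := by
  rw [polyDim, polyDim, ← T.coe_toAffineMap, ← AffineSubspace.map_span,
    AffineSubspace.map_direction]
  exact LinearEquiv.finrank_map_eq T.linear _

lemma IsFaceOf.image_affineEquiv {K F : Set (Fin n → ℝ)} (h : IsFaceOf n K F) :
    IsFaceOf n (T '' K) (T '' F) := by
  obtain ⟨L, c, hL, hne, hle, rfl⟩ := h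
  set L' := L ∘ₗ T.symm.linear.toLinearMap
  have hL' (x : Fin n → ℝ) : L' (T x) = L x - L (T.symm 0) := by
    simpa [L'] using congrArg L (T.symm.toAffineMap.linearMap_vsub (T x) 0)
  have himage : T '' (K ∩ {x | L x = c}) = T '' K ∩ {y | L' y = c - L (T.symm 0)} := by
    rw [← Set.image_inter_preimage]
    congr! 2
    ext x
    simp [hL']
  refine ⟨L', c - L (T.symm 0), fun h0 => hL ?_, himage ▸ hne.image T, ?_, himage⟩
  · refine LinearMap.ext fun x => ?_
    simpa [L'] using congrArg (· (T.linear x)) h0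
  · rintro _ ⟨x, hx, rfl⟩
    rw [hL']
    linarith [hle x hx]

lemma IsFacetOf.image_affineEquiv {K F : Set (Fin n → ℝ)} (h : IsFacetOf n K F) :
    IsFacetOf n (T '' K) (T '' F) :=
  ⟨h.1.image_affineEquiv T, by rw [polyDim_image_affineEquiv, polyDim_image_affineEquiv, h.2]⟩

end AffineImage

lemma AKset_eq_empty_of_forall_projLast_mem {n : ℕ} {K : Set (Fin n → ℝ)}
    (h : ∀ x ∈ K, projLast n x ∈ K) : AKset n K = ∅ := by
  refine Set.eq_empty_of_forall_notMem ?_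
  rintro _ ⟨-, ⟨x, rfl, hx⟩, hy⟩
  exact hy (h x hx)

theorem exists_secondTrimmingPosition_of_linearIndependent {n : ℕ} {K F : Set (Fin (n + 1) → ℝ)}
    (hK : IsConvexPolyhedron (n + 1) K) (hF : IsFacetOf (n + 1) K F)
    {v : Fin n → Fin (n + 1) → ℝ} (hv : LinearIndependent ℝ v)
    (hvF : ∀ j, ∃ p, ∀ t : ℝ, 0 ≤ t → p + t • v j ∈ F) :
    ∃ T : (Fin (n + 1) → ℝ) ≃ᵃ[ℝ] (Fin (n + 1) → ℝ),
      SecondTrimmingPosition (n + 1) (T '' K) (T '' F) := by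
  obtain ⟨m, L, c, -, rfl⟩ := hK
  obtain ⟨L₀, c₀, hL₀, ⟨q, hqK, hq⟩, hle, rfl⟩ := id hF.1
  have hE : finrank ℝ (Fin (n + 1) → ℝ) = n + 1 := finrank_fin_fun ℝ
  have hray (j : Fin n) : L₀ (v j) = 0 ∧ ∀ i, L i (v j) ≤ 0 := by
    obtain ⟨p, hp⟩ := hvF j
    refine ⟨?_, fun i => (L i).map_nonpos_of_forall_map_add_smul_le fun t ht => (hp t ht).1 i⟩
    have h₀ := (hp 0 le_rfl).2
    have h₁ := (hp 1 zero_le_one).2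
    simp only [Set.mem_ofPred_eq, map_add, map_smul, smul_eq_mul] at h₀ h₁
    linarith
  obtain ⟨u, hu₀, hu⟩ := exists_map_eq_one_and_map_nonpos_or_forall_eq_zero L hE hL₀ hv
    (fun j => (hray j).1) (fun i j => (hray j).2 i)
  obtain ⟨T, hT⟩ := exists_affineEquiv_apply_last hE hu₀ c₀
  have hlast (i : Fin (n + 1)) (hi : (i : ℕ) = n + 1 - 1) : i = Fin.last n :=
    Fin.ext (by simpa using hi)
  refine ⟨T, hF.image_affineEquiv T, ?_, ?_, ?_⟩
  · rintro _ ⟨x, hx, rfl⟩ i hi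
    rw [hlast i hi, (hT x).1, hx.2, sub_self]
  · rintro _ ⟨x, hx, rfl⟩ i hi
    rw [hlast i hi, (hT x).1]
    linarith [hle x hx]
  · rw [AKset_eq_empty_of_forall_projLast_mem]
    · exact isBounded_empty
    rintro _ ⟨x, hx, rfl⟩
    refine ⟨x + (c₀ - L₀ x) • u, ?_, by rw [← (hT x).2, T.apply_symm_apply]⟩
    refine add_smul_mem_of_map_nonpos L c hqK hu hx (by linarith [hle x hx]) ?_
    simp only [LinearMap.mem_ker, map_sub, map_add, map_smul, smul_eq_mul, hu₀,
      show L₀ q = c₀ from hq]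
    ring

theorem placed_second_trimming_of_facet_with_nonparallel_unbounded_edges_general
    (K F : Set (Fin 3 → ℝ)) (hpoly : IsConvexPolyhedron 3 K)
    (hF : IsFacetOf 3 K F)
    (hedges : ∃ (A₁ A₂ : Set (Fin 3 → ℝ)) (v₁ v₂ : Fin 3 → ℝ),
      IsUnboundedEdgeWithDir 3 K A₁ v₁ ∧ IsUnboundedEdgeWithDir 3 K A₂ v₂ ∧
      A₁ ⊆ F ∧ A₂ ⊆ F ∧ LinearIndependent ℝ ![v₁, v₂]) :
    ∃ T : (Fin 3 → ℝ) ≃ᵃ[ℝ] (Fin 3 → ℝ),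
      SecondTrimmingPosition 3 (T '' K) (T '' F) := by
  obtain ⟨A₁, A₂, v₁, v₂, ⟨-, -, -, q₁, -, rfl⟩, ⟨-, -, -, q₂, -, rfl⟩, hA₁, hA₂, hv⟩ := hedges
  exact exists_secondTrimmingPosition_of_linearIndependent (n := 2) hpoly hF hv
    (Fin.forall_fin_two.2 ⟨⟨q₁, fun t ht => hA₁ ⟨t, ht, rfl⟩⟩, ⟨q₂, fun t ht => hA₂ ⟨t, ht, rfl⟩⟩⟩)

/-- Proposition 2 (i): a non-degenerate 3-dimensional unbounded convex polyhedron can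
be placed in second trimming position with respect to any facet having two unbounded
edges with linearly independent directions. -/
theorem placed_second_trimming_of_facet_with_nonparallel_unbounded_edges
    (K F : Set (Fin 3 → ℝ)) (hpoly : IsConvexPolyhedron 3 K)
    (hdim : polyDim 3 K = 3) (hunb : ¬ IsBounded K)
    (hnd : ∃ p, IsVertexOf 3 K p) (hF : IsFacetOf 3 K F)
    (hedges : ∃ (A₁ A₂ : Set (Fin 3 → ℝ)) (v₁ v₂ : Fin 3 → ℝ),
      IsUnboundedEdgeWithDir 3 K A₁ v₁ ∧ IsUnboundedEdgeWithDir 3 K A₂ v₂ ∧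
      A₁ ⊆ F ∧ A₂ ⊆ F ∧ LinearIndependent ℝ ![v₁, v₂]) :
    ∃ T : (Fin 3 → ℝ) ≃ᵃ[ℝ] (Fin 3 → ℝ),
      SecondTrimmingPosition 3 (T '' K) (T '' F) :=
  placed_second_trimming_of_facet_with_nonparallel_unbounded_edges_general K F hpoly hF hedges
end

section
/- For every integer n ≥ 3 there exists a bounded convex polyhedron K ⊂ ℝ^n of dimension n such that for every nonzero vector v ∈ ℝ^n and every affine hyperplane H ⊂ ℝ^n whose direction does not contain v, the projection π : ℝ^n → H parallel to v satisfies π(K) ≠ K ∩ H. -/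
/-!
`K` is the standard simplex `{x ≥ 0, ∑ x ≤ 1}` with each corner `e c` cut off by a hyperplane
`cut c x = 1/2`, the cuts having pairwise different slopes. Suppose `π(K) = K ∩ H`. If two linear
functionals are maximal on `K` at a point `w` and take values of opposite signs at `v`, then `w` is
the only point of `K` on its line parallel to `v`, so `π w = w` and `w ∈ H`. Applied to the
vertices of `K` and their facets, this puts so many vertices on `H` that `L = 0`, unless `v` is
parallel to a coordinate axis or to some `e a - e b`; in those two cases the projection of a
suitable vertex is a corner `e a` of the simplex, which is not in `K`.
-/

open Bornology Pointwise

section SectionalProjection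

variable {E : Type*} [AddCommGroup E] [Module ℝ E]

-- When `L v = 0` this is the identity.
noncomputable def parallelProj (L : E →ₗ[ℝ] ℝ) (c : ℝ) (v x : E) : E := x + ((c - L x) / L v) • v

def IsSectionalProjection (K : Set E) (L : E →ₗ[ℝ] ℝ) (c : ℝ) (v : E) : Prop :=
  parallelProj L c v '' K = K ∩ {x | L x = c}

namespace IsSectionalProjection

variable {K : Set E} {L : E →ₗ[ℝ] ℝ} {c : ℝ} {v w : E}

lemma neg (h : IsSectionalProjection K L c v) : IsSectionalProjection K L c (-v) := by
  have : parallelProj L c (-v) = parallelProj L c v := by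
    ext x; simp only [parallelProj, map_neg, div_neg, neg_smul, smul_neg, neg_neg]
  rwa [IsSectionalProjection, this]

lemma add_smul_mem (h : IsSectionalProjection K L c v) (hLv : L v ≠ 0) (hw : w ∈ K) {t : ℝ}
    (ht : L (w + t • v) = c) : w + t • v ∈ K := by
  have hmem : parallelProj L c v w ∈ K ∩ {x | L x = c} := h ▸ Set.mem_image_of_mem _ hw
  rw [map_add, map_smul, smul_eq_mul] at ht
  have : t = (c - L w) / L v := by field_simp; linarith
  exact this ▸ hmem.1

lemma apply_eq_of_isMaxOn (h : IsSectionalProjection K L c v) (hw : w ∈ K) {f g : E →ₗ[ℝ] ℝ}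
    (hf : IsMaxOn f K w) (hg : IsMaxOn g K w) (hfg : f v * g v < 0) : L w = c := by
  set t := (c - L w) / L v
  have hmem : w + t • v ∈ K ∩ {x | L x = c} := h ▸ Set.mem_image_of_mem _ hw
  have hft : t * f v ≤ 0 := by simpa using hf hmem.1
  have hgt : t * g v ≤ 0 := by simpa using hg hmem.1
  have ht : t = 0 := by
    by_contra ht
    nlinarith [mul_nonneg_of_nonpos_of_nonpos hft hgt, sq_pos_of_ne_zero ht]
  simpa [ht] using hmem.2

end IsSectionalProjection

end SectionalProjection

open Finset

lemma isConvexPolyhedron_of_fintype {n : ℕ} {ι : Type*} [Fintype ι]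
    (L : ι → (Fin n → ℝ) →ₗ[ℝ] ℝ) (b : ι → ℝ) (hL : ∀ i, L i ≠ 0) :
    IsConvexPolyhedron n {x | ∀ i, L i x ≤ b i} := by
  let e := Fintype.equivFin ι
  refine ⟨Fintype.card ι, L ∘ e.symm, b ∘ e.symm, fun i => hL _, ?_⟩
  ext x
  exact e.symm.forall_congr_right.symm

lemma exists_ne_and_of_ne {α : Type*} {P : α → Prop} {p q : α} (hpq : p ≠ q) (hp : P p)
    (hq : P q) (k : α) : ∃ r, r ≠ k ∧ P r := by
  by_cases hpk : p = k
  · exact ⟨q, hpk ▸ hpq.symm, hq⟩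
  · exact ⟨p, hpk, hp⟩

lemma LinearMap.eq_zero_of_apply_single {ι : Type*} [Finite ι] [DecidableEq ι]
    {L : (ι → ℝ) →ₗ[ℝ] ℝ} (h : ∀ k, L (Pi.single k 1) = 0) : L = 0 :=
  have := Fintype.ofFinite ι
  (Pi.basisFun ℝ ι).ext fun k => by simpa using h k

namespace trimmedSimplex

variable {n : ℕ}

noncomputable def weight (k : Fin n) : ℝ := ((n : ℝ) + k)⁻¹

noncomputable def cut (c : Fin n) : (Fin n → ℝ) →ₗ[ℝ] ℝ :=
  (1 + weight c) • LinearMap.proj c - ∑ k, weight k • LinearMap.proj k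

noncomputable def total : (Fin n → ℝ) →ₗ[ℝ] ℝ := ∑ k, LinearMap.proj k

lemma cut_apply (c : Fin n) (x : Fin n → ℝ) :
    cut c x = (1 + weight c) * x c - ∑ k, weight k * x k := by
  simp [cut]

lemma total_apply (x : Fin n → ℝ) : total x = ∑ k, x k := by
  simp [total]

lemma cut_single_self (c : Fin n) : cut c (Pi.single c 1) = 1 := by
  simp [cut_apply, Pi.single_apply]

lemma cut_single_of_ne {c d : Fin n} (h : d ≠ c) : cut c (Pi.single d 1) = -weight d := by
  simp [cut_apply, Pi.single_apply, h.symm]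

lemma total_single (d : Fin n) : total (Pi.single d (1 : ℝ)) = 1 := by
  simp [total_apply]

lemma weight_pos (k : Fin n) : 0 < weight k := by
  have : (0 : ℝ) < n := by exact_mod_cast k.pos
  unfold weight; positivity

lemma weight_injective : Function.Injective (weight (n := n)) := by
  intro j k h
  have : (n : ℝ) + j = n + k := inv_injective h
  exact Fin.ext (by exact_mod_cast add_left_cancel this)

lemma sum_weight_le_one : ∑ k : Fin n, weight k ≤ 1 := by
  rcases Nat.eq_zero_or_pos n with rfl | hn
  · simp
  have hn' : (0 : ℝ) < n := by exact_mod_cast hn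
  calc ∑ k : Fin n, weight k ≤ ∑ _k : Fin n, (n : ℝ)⁻¹ :=
        sum_le_sum fun k _ => inv_anti₀ hn' (by simp)
    _ = 1 := by simp [hn'.ne']

lemma cut_pos_of_isMax {v : Fin n → ℝ} {m : Fin n} (hpos : 0 < v m) (hmax : ∀ k, v k ≤ v m) :
    0 < cut m v := by
  have hsum : ∑ k, weight k * v k ≤ v m :=
    calc ∑ k, weight k * v k ≤ ∑ k, weight k * v m :=
          sum_le_sum fun k _ => mul_le_mul_of_nonneg_left (hmax k) (weight_pos k).le
      _ = (∑ k, weight k) * v m := by rw [sum_mul]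
      _ ≤ v m := mul_le_of_le_one_left hpos.le sum_weight_le_one
  rw [cut_apply]
  nlinarith [weight_pos m]

lemma cut_single_nonpos {c d : Fin n} (h : d ≠ c) : cut c (Pi.single d 1) ≤ 0 := by
  rw [cut_single_of_ne h]; exact neg_nonpos.mpr (weight_pos d).le

lemma cut_single_le_one (c d : Fin n) : cut c (Pi.single d 1) ≤ 1 := by
  rcases eq_or_ne d c with rfl | h
  · rw [cut_single_self]
  · linarith [cut_single_nonpos h]

noncomputable def _root_.trimmedSimplex (n : ℕ) : Set (Fin n → ℝ) :=
  {x | (∀ k, 0 ≤ x k) ∧ total x ≤ 1 ∧ ∀ c, cut c x ≤ 1 / 2}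

/- The constraint `cut c x ≤ 1 / 2` cuts the corner `e c` off the simplex; its hyperplane meets
the edge `[0, e c]` at `axisVertex c` and the edge `[e c, e j]` at `edgeVertex c j`. -/

noncomputable def edgeParam (j : Fin n) : ℝ := (2 * (1 + weight j))⁻¹

noncomputable def axisVertex (c : Fin n) : Fin n → ℝ := (1 / 2 : ℝ) • Pi.single c 1

noncomputable def edgeVertex (c j : Fin n) : Fin n → ℝ :=
  (1 - edgeParam j) • Pi.single c 1 + edgeParam j • Pi.single j 1

lemma edgeParam_pos (j : Fin n) : 0 < edgeParam j := by
  have := weight_pos j; unfold edgeParam; positivity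

lemma edgeParam_lt_half (j : Fin n) : edgeParam j < 1 / 2 := by
  have := weight_pos j
  unfold edgeParam
  rw [inv_lt_comm₀ (by positivity) (by norm_num)]
  linarith

lemma cut_axisVertex (c : Fin n) : cut c (axisVertex c) = 1 / 2 := by
  rw [axisVertex, map_smul, cut_single_self, smul_eq_mul, mul_one]

lemma cut_edgeVertex {c j : Fin n} (hcj : c ≠ j) : cut c (edgeVertex c j) = 1 / 2 := by
  have h := weight_pos j
  simp only [edgeVertex, map_add, map_smul, smul_eq_mul, cut_single_self, cut_single_of_ne hcj.symm,
    edgeParam]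
  field_simp
  ring

lemma total_edgeVertex (c j : Fin n) : total (edgeVertex c j) = 1 := by
  simp [edgeVertex, total_single]

lemma zero_mem : (0 : Fin n → ℝ) ∈ trimmedSimplex n :=
  ⟨fun _ => le_rfl, by simp, fun _ => by simp⟩

lemma axisVertex_mem (c : Fin n) : axisVertex c ∈ trimmedSimplex n := by
  refine ⟨fun k => ?_, by norm_num [axisVertex, total_single], fun d => ?_⟩
  · simp only [axisVertex, Pi.smul_apply, Pi.single_apply, smul_eq_mul]
    split_ifs <;> norm_num
  · rw [axisVertex, map_smul, smul_eq_mul]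
    linarith [cut_single_le_one d c]

lemma edgeVertex_mem {c j : Fin n} (hcj : c ≠ j) : edgeVertex c j ∈ trimmedSimplex n := by
  have hs := edgeParam_pos j
  have hs' := edgeParam_lt_half j
  refine ⟨fun k => ?_, (total_edgeVertex c j).le, fun d => ?_⟩
  · simp only [edgeVertex, Pi.add_apply, Pi.smul_apply, Pi.single_apply, smul_eq_mul]
    split_ifs <;> linarith
  · rcases eq_or_ne d c with rfl | hdc
    · exact (cut_edgeVertex hcj).le
    · rw [edgeVertex, map_add, map_smul, map_smul, smul_eq_mul, smul_eq_mul]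
      nlinarith [cut_single_nonpos hdc.symm, cut_single_le_one d j]

lemma single_not_mem (c : Fin n) : Pi.single c 1 ∉ trimmedSimplex n := fun h => by
  linarith [h.2.2 c, cut_single_self c]

lemma isMaxOn_neg_proj {w : Fin n → ℝ} {k : Fin n} (hw : w k = 0) :
    IsMaxOn (-LinearMap.proj k : (Fin n → ℝ) →ₗ[ℝ] ℝ) (trimmedSimplex n) w := fun x hx => by
  simp [hw, hx.1 k]

lemma isMaxOn_total {w : Fin n → ℝ} (hw : total w = 1) : IsMaxOn total (trimmedSimplex n) w :=
  fun _ hx => hw ▸ hx.2.1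

lemma isMaxOn_cut {w : Fin n → ℝ} {c : Fin n} (hw : cut c w = 1 / 2) :
    IsMaxOn (cut c) (trimmedSimplex n) w :=
  fun _ hx => hw ▸ hx.2.2 c

lemma isConvexPolyhedron (hn : 0 < n) : IsConvexPolyhedron n (trimmedSimplex n) := by
  have hne : ∀ (f : (Fin n → ℝ) →ₗ[ℝ] ℝ) (k : Fin n), f (Pi.single k 1) ≠ 0 → f ≠ 0 :=
    fun f k hk hf => hk (by simp [hf])
  convert isConvexPolyhedron_of_fintype (ι := Fin n ⊕ Fin n ⊕ Unit)
    (Sum.elim (fun k => -LinearMap.proj k) (Sum.elim cut fun _ => total))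
    (Sum.elim 0 (Sum.elim (fun _ => 1 / 2) fun _ => 1)) ?_ using 1
  · ext x
    simp [trimmedSimplex, Sum.forall, and_comm, and_left_comm]
  · rintro (k | c | _)
    · exact hne _ k (by simp)
    · exact hne _ c (by simp [cut_single_self])
    · exact hne _ ⟨0, hn⟩ (by simp [total_single])

lemma isBounded : IsBounded (trimmedSimplex n) :=
  (Metric.isBounded_Icc (0 : Fin n → ℝ) 1).subset fun x hx =>
    ⟨hx.1, fun k => (single_le_sum (fun j _ => hx.1 j) (mem_univ k)).trans
      ((total_apply x).symm.trans_le hx.2.1)⟩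

lemma finrank_direction_affineSpan :
    Module.finrank ℝ (affineSpan ℝ (trimmedSimplex n)).direction = n := by
  have hspan : (affineSpan ℝ (trimmedSimplex n)).direction = ⊤ := by
    rw [direction_affineSpan, vectorSpan_eq_span_vsub_set_right ℝ zero_mem, eq_top_iff,
      ← (Pi.basisFun ℝ (Fin n)).span_eq, Submodule.span_le]
    rintro _ ⟨k, rfl⟩
    have hk : (2 : ℝ) • axisVertex k ∈
        Submodule.span ℝ ((· -ᵥ (0 : Fin n → ℝ)) '' trimmedSimplex n) :=
      Submodule.smul_mem _ _ (Submodule.subset_span ⟨_, axisVertex_mem k, by simp⟩)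
    simpa [axisVertex, smul_smul] using hk
  rw [hspan, finrank_top, Module.finrank_fin_fun]

lemma apply_edgeVertex (L : (Fin n → ℝ) →ₗ[ℝ] ℝ) (a b : Fin n) :
    L (edgeVertex a b) =
      (1 - edgeParam b) * L (Pi.single a 1) + edgeParam b * L (Pi.single b 1) := by
  simp only [edgeVertex, map_add, map_smul, smul_eq_mul]

variable {L : (Fin n → ℝ) →ₗ[ℝ] ℝ} {c : ℝ} {v : Fin n → ℝ}

lemma apply_single_eq_of_edgeVertex {x : ℝ} {a b : Fin n} (ha : L (edgeVertex a b) = x)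
    (hb : L (edgeVertex b a) = x) : L (Pi.single a 1) = L (Pi.single b 1) := by
  rw [apply_edgeVertex] at ha hb
  have hne : 1 - edgeParam a - edgeParam b ≠ 0 := by
    linarith [edgeParam_lt_half a, edgeParam_lt_half b]
  have h : (1 - edgeParam a - edgeParam b) * (L (Pi.single a 1) - L (Pi.single b 1)) = 0 := by
    linear_combination ha - hb
  exact sub_eq_zero.mp ((mul_eq_zero.mp h).resolve_left hne)

lemma eq_zero_of_mul_neg (hπ : IsSectionalProjection (trimmedSimplex n) L c v) {i j : Fin n}
    (hij : v i * v j < 0) : c = 0 := by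
  have h := hπ.apply_eq_of_isMaxOn zero_mem (isMaxOn_neg_proj (k := i) rfl)
    (isMaxOn_neg_proj (k := j) rfl) (by simpa using hij)
  simpa using h.symm

lemma apply_single_eq_zero (hπ : IsSectionalProjection (trimmedSimplex n) L c v)
    {i j k : Fin n} (hik : i ≠ k) (hjk : j ≠ k) (hij : v i * v j < 0) :
    L (Pi.single k 1) = 0 := by
  have h := hπ.apply_eq_of_isMaxOn (axisVertex_mem k)
    (isMaxOn_neg_proj (k := i) (by simp [axisVertex, hik]))
    (isMaxOn_neg_proj (k := j) (by simp [axisVertex, hjk])) (by simpa using hij)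
  rw [eq_zero_of_mul_neg hπ hij, axisVertex, map_smul, smul_eq_mul] at h
  simpa using h

lemma false_of_two_pos_of_neg (hπ : IsSectionalProjection (trimmedSimplex n) L c v)
    (hL : L ≠ 0) {m r b : Fin n} (hm : ∀ k, v k ≤ v m) (hrm : r ≠ m) (hr : 0 < v r)
    (hb : v b < 0) : False := by
  have hvm : 0 < v m := hr.trans_le (hm r)
  have hc : c = 0 := eq_zero_of_mul_neg hπ (mul_neg_of_pos_of_neg hr hb)
  have hoff : ∀ k, k ≠ b → L (Pi.single k 1) = 0 := fun k hkb => by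
    obtain ⟨p, hpk, hp⟩ := exists_ne_and_of_ne (P := (0 < v ·)) hrm hr hvm k
    exact apply_single_eq_zero hπ hpk hkb.symm (mul_neg_of_pos_of_neg hp hb)
  have hmb : m ≠ b := by rintro rfl; linarith
  have hrb : r ≠ b := by rintro rfl; linarith
  have h := hπ.apply_eq_of_isMaxOn (edgeVertex_mem hmb) (isMaxOn_cut (cut_edgeVertex hmb))
    (isMaxOn_neg_proj (k := r) (by simp [edgeVertex, hrm, hrb]))
    (mul_neg_of_pos_of_neg (cut_pos_of_isMax hvm hm) (by simpa using hr))
  rw [apply_edgeVertex, hoff m hmb, hc, mul_zero, zero_add] at h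
  have hb0 : L (Pi.single b 1) = 0 := (mul_eq_zero.mp h).resolve_left (edgeParam_pos b).ne'
  refine hL (LinearMap.eq_zero_of_apply_single fun k => ?_)
  rcases eq_or_ne k b with rfl | hkb
  exacts [hb0, hoff k hkb]

lemma false_of_nonneg_of_two_pos (hn : 3 ≤ n) (hπ : IsSectionalProjection (trimmedSimplex n) L c v)
    (hL : L ≠ 0) (hv : ∀ k, 0 ≤ v k) {m r : Fin n} (hm : ∀ k, v k ≤ v m) (hrm : r ≠ m)
    (hr : 0 < v r) : False := by
  have hvm : 0 < v m := hr.trans_le (hm r)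
  have htot : 0 < total v := by
    rw [total_apply]; exact hr.trans_le (single_le_sum (fun k _ => hv k) (mem_univ r))
  have hedge : ∀ a b p, a ≠ b → p ≠ a → p ≠ b → 0 < v p → L (edgeVertex a b) = c :=
    fun a b p hab hpa hpb hp => hπ.apply_eq_of_isMaxOn (edgeVertex_mem hab)
      (isMaxOn_total (total_edgeVertex a b))
      (isMaxOn_neg_proj (k := p) (by simp [edgeVertex, hpa, hpb]))
      (mul_neg_of_pos_of_neg htot (by simpa using hp))
  obtain ⟨o, hom, hor⟩ := Fin.exists_ne_and_ne_of_two_lt m r hn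
  have hLrm : L (Pi.single r 1) = L (Pi.single m 1) := by
    have h₁ := hedge r o m hor.symm hrm.symm hom.symm hvm
    have h₂ := hedge m o r hom.symm hrm hor.symm hr
    rw [apply_edgeVertex] at h₁ h₂
    exact mul_left_cancel₀ (by linarith [edgeParam_lt_half o] : 1 - edgeParam o ≠ 0)
      (by linear_combination h₁ - h₂)
  have hall : ∀ k, L (Pi.single k 1) = L (Pi.single m 1) := fun k => by
    rcases eq_or_ne k m with rfl | hkm
    · rfl
    rcases eq_or_ne k r with rfl | hkr
    · exact hLrm
    exact apply_single_eq_of_edgeVertex (hedge k m r hkm hkr.symm hrm hr)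
      (hedge m k r hkm.symm hrm hkr.symm hr)
  have hc : c = L (Pi.single m 1) := by
    have h := hedge m o r hom.symm hrm hor.symm hr
    rw [apply_edgeVertex, hall o] at h
    linear_combination -h
  have h := hπ.apply_eq_of_isMaxOn (axisVertex_mem m) (isMaxOn_cut (cut_axisVertex m))
    (isMaxOn_neg_proj (k := r) (by simp [axisVertex, hrm]))
    (mul_neg_of_pos_of_neg (cut_pos_of_isMax hvm hm) (by simpa using hr))
  rw [axisVertex, map_smul, smul_eq_mul, ← hc] at h
  have hc0 : c = 0 := by linarith
  exact hL (LinearMap.eq_zero_of_apply_single fun k => (hall k).trans (hc.symm.trans hc0))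

lemma false_of_two_pos (hn : 3 ≤ n) (hπ : IsSectionalProjection (trimmedSimplex n) L c v)
    (hL : L ≠ 0) {i j : Fin n} (hij : i ≠ j) (hi : 0 < v i) (hj : 0 < v j) : False := by
  have : Nonempty (Fin n) := ⟨i⟩
  obtain ⟨m, hm⟩ := Finite.exists_max v
  obtain ⟨r, hrm, hr⟩ := exists_ne_and_of_ne (P := (0 < v ·)) hij hi hj m
  by_cases hneg : ∃ b, v b < 0
  · obtain ⟨b, hb⟩ := hneg
    exact false_of_two_pos_of_neg hπ hL hm hrm hr hb
  · push Not at hneg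
    exact false_of_nonneg_of_two_pos hn hπ hL hneg hm hrm hr

lemma false_of_eq_smul_single (hn : 3 ≤ n) (hπ : IsSectionalProjection (trimmedSimplex n) L c v)
    (hLv : L v ≠ 0) {a : Fin n} {μ : ℝ} (hμ : μ ≠ 0) (hv : v = μ • Pi.single a 1) : False := by
  have hedge : ∀ x y, x ≠ a → x ≠ y → L (edgeVertex x y) = c := fun x y hxa hxy =>
    hπ.apply_eq_of_isMaxOn (edgeVertex_mem hxy) (isMaxOn_total (total_edgeVertex x y))
      (isMaxOn_cut (cut_edgeVertex hxy)) (by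
        rw [hv, map_smul, map_smul, total_single, cut_single_of_ne hxa.symm, smul_eq_mul,
          smul_eq_mul]
        nlinarith [mul_pos (weight_pos a) (sq_pos_of_ne_zero hμ)])
  obtain ⟨p, hpa, -⟩ := Fin.exists_ne_and_ne_of_two_lt a a hn
  obtain ⟨q, hqa, hqp⟩ := Fin.exists_ne_and_ne_of_two_lt a p hn
  have hpq := apply_single_eq_of_edgeVertex (hedge p q hpa hqp.symm) (hedge q p hqa hqp)
  have hcp : c = L (Pi.single p 1) := by
    have h := hedge p q hpa hqp.symm
    rw [apply_edgeVertex, ← hpq] at h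
    linear_combination -h
  have hca : L (Pi.single a 1) = c := by
    have h := hedge p a hpa hpa
    rw [apply_edgeVertex, ← hcp] at h
    have h' : edgeParam a * (L (Pi.single a 1) - c) = 0 := by linear_combination h
    exact sub_eq_zero.mp ((mul_eq_zero.mp h').resolve_left (edgeParam_pos a).ne')
  have he : Pi.single a 1 = 0 + μ⁻¹ • v := by
    rw [hv, smul_smul, inv_mul_cancel₀ hμ, one_smul, zero_add]
  rw [he] at hca
  exact single_not_mem a (he ▸ hπ.add_smul_mem hLv zero_mem hca)

lemma false_of_eq_smul_single_add_of_add_ne_zero (hn : 3 ≤ n)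
    (hπ : IsSectionalProjection (trimmedSimplex n) L c v) (hL : L ≠ 0) {a b : Fin n} (hab : a ≠ b)
    {α β : ℝ} (hv : v = α • Pi.single a 1 + β • Pi.single b 1) (hαβ : α * β < 0)
    (hsum : (α + β) * α < 0) : False := by
  have hvab : v a * v b < 0 := by simpa [hv, hab, hab.symm] using hαβ
  have hc : c = 0 := eq_zero_of_mul_neg hπ hvab
  have hβsum : 0 < β * (α + β) := by
    nlinarith [mul_pos_of_neg_of_neg hαβ hsum, sq_nonneg α]
  have hedge : ∀ j, a ≠ j → L (edgeVertex a j) = 0 := fun j haj =>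
    hc ▸ hπ.apply_eq_of_isMaxOn (edgeVertex_mem haj) (isMaxOn_cut (cut_edgeVertex haj))
      (isMaxOn_total (total_edgeVertex a j)) (by
        simp only [hv, map_add, map_smul, smul_eq_mul, cut_single_self, cut_single_of_ne hab.symm,
          total_single]
        nlinarith [mul_pos (weight_pos b) hβsum])
  obtain ⟨o, hoa, hob⟩ := Fin.exists_ne_and_ne_of_two_lt a b hn
  have hoff : ∀ k, k ≠ a → k ≠ b → L (Pi.single k 1) = 0 := fun k hka hkb =>
    apply_single_eq_zero hπ hka.symm hkb.symm hvab
  have ha : L (Pi.single a 1) = 0 := by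
    have h := hedge o hoa.symm
    rw [apply_edgeVertex, hoff o hoa hob, mul_zero, add_zero] at h
    exact (mul_eq_zero.mp h).resolve_left (by linarith [edgeParam_lt_half o])
  have hb : L (Pi.single b 1) = 0 := by
    have h := hedge b hab
    rw [apply_edgeVertex, ha, mul_zero, zero_add] at h
    exact (mul_eq_zero.mp h).resolve_left (edgeParam_pos b).ne'
  refine hL (LinearMap.eq_zero_of_apply_single fun k => ?_)
  rcases eq_or_ne k a with rfl | hka
  · exact ha
  rcases eq_or_ne k b with rfl | hkb
  exacts [hb, hoff k hka hkb]

lemma false_of_eq_smul_sub_single (hn : 3 ≤ n) (hπ : IsSectionalProjection (trimmedSimplex n) L c v)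
    (hLv : L v ≠ 0) {a b : Fin n} (hab : a ≠ b) {α : ℝ} (hα : α ≠ 0)
    (hv : v = α • (Pi.single a 1 - Pi.single b 1)) (hw : weight b < weight a) : False := by
  have hva : v a = α := by simp [hv, hab.symm]
  have hvb : v b = -α := by simp [hv, hab]
  have hvab : v a * v b < 0 := by rw [hva, hvb]; nlinarith [sq_pos_of_ne_zero hα]
  have hc : c = 0 := eq_zero_of_mul_neg hπ hvab
  obtain ⟨o, hoa, hob⟩ := Fin.exists_ne_and_ne_of_two_lt a b hn
  -- the only place where the weights must be distinct
  have hcut : cut o v = α * (weight b - weight a) := by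
    rw [hv, map_smul, map_sub, cut_single_of_ne hoa.symm, cut_single_of_ne hob.symm, smul_eq_mul]
    ring
  have h := hπ.apply_eq_of_isMaxOn (edgeVertex_mem hoa)
    (isMaxOn_neg_proj (k := b) (by simp [edgeVertex, hob.symm, hab.symm]))
    (isMaxOn_cut (cut_edgeVertex hoa)) (by
      rw [LinearMap.neg_apply, LinearMap.proj_apply, hvb, neg_neg, hcut]
      nlinarith [mul_pos (sq_pos_of_ne_zero hα) (sub_pos.mpr hw)])
  rw [apply_edgeVertex, apply_single_eq_zero hπ hoa.symm hob.symm hvab, hc, mul_zero,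
    zero_add] at h
  have ha : L (Pi.single a 1) = c :=
    hc ▸ (mul_eq_zero.mp h).resolve_left (edgeParam_pos a).ne'
  have he : Pi.single a 1 = edgeVertex b a + ((1 - edgeParam a) / α) • v := by
    rw [hv, smul_smul, div_mul_cancel₀ _ hα, edgeVertex]
    module
  rw [he] at ha
  exact single_not_mem a (he ▸ hπ.add_smul_mem hLv (edgeVertex_mem hab.symm) ha)

lemma false_of_eq_smul_single_add (hn : 3 ≤ n) (hπ : IsSectionalProjection (trimmedSimplex n) L c v)
    (hL : L ≠ 0) (hLv : L v ≠ 0) {a b : Fin n} (hab : a ≠ b) {α β : ℝ}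
    (hv : v = α • Pi.single a 1 + β • Pi.single b 1) (hαβ : α * β < 0) : False := by
  rcases lt_trichotomy ((α + β) * α) 0 with hsum | hsum | hsum
  · exact false_of_eq_smul_single_add_of_add_ne_zero hn hπ hL hab hv hαβ hsum
  · have hα : α ≠ 0 := left_ne_zero_of_mul hαβ.ne
    have hβ : β = -α := by linarith [(mul_eq_zero.mp hsum).resolve_right hα]
    rcases (weight_injective.ne hab).lt_or_gt with hw | hw
    · exact false_of_eq_smul_sub_single hn hπ hLv hab.symm (neg_ne_zero.mpr hα)
        (by rw [hv, hβ]; module) hw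
    · exact false_of_eq_smul_sub_single hn hπ hLv hab hα (by rw [hv, hβ]; module) hw
  · exact false_of_eq_smul_single_add_of_add_ne_zero hn hπ hL hab.symm (by rw [hv, add_comm])
      (by linarith [mul_comm α β]) (by nlinarith [mul_neg_of_pos_of_neg hsum hαβ, sq_nonneg α])

lemma not_isSectionalProjection (hn : 3 ≤ n) (hv : v ≠ 0) (hL : L ≠ 0) (hLv : L v ≠ 0) :
    ¬ IsSectionalProjection (trimmedSimplex n) L c v := by
  intro hπ
  by_cases hsame : ∃ i j, i ≠ j ∧ 0 < v i * v j
  · obtain ⟨i, j, hij, h⟩ := hsame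
    rcases pos_and_pos_or_neg_and_neg_of_mul_pos h with ⟨hi, hj⟩ | ⟨hi, hj⟩
    · exact false_of_two_pos hn hπ hL hij hi hj
    · exact false_of_two_pos hn hπ.neg hL hij (by simpa using hi) (by simpa using hj)
  push Not at hsame
  obtain ⟨a, ha⟩ : ∃ a, v a ≠ 0 := Function.ne_iff.mp hv
  by_cases hb : ∃ b, b ≠ a ∧ v b ≠ 0
  · obtain ⟨b, hba, hb⟩ := hb
    have hvab : v a * v b < 0 := (hsame a b hba.symm).lt_of_ne (mul_ne_zero ha hb)
    refine false_of_eq_smul_single_add hn hπ hL hLv hba.symm ?_ hvab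
    ext k
    rcases eq_or_ne k a with rfl | hka
    · simp [hba]
    rcases eq_or_ne k b with rfl | hkb
    · simp [hka]
    simp only [Pi.add_apply, Pi.smul_apply, Pi.single_apply, hka, hkb, if_false, smul_zero,
      add_zero]
    -- a third nonzero coordinate would have the sign of `v a` or of `v b`
    by_contra hk
    nlinarith [mul_nonneg_of_nonpos_of_nonpos (hsame k a hka) (hsame k b hkb),
      mul_pos (sq_pos_of_ne_zero hk) (neg_pos.mpr hvab)]
  · push Not at hb
    refine false_of_eq_smul_single hn hπ hLv (a := a) ha ?_
    ext k
    rcases eq_or_ne k a with rfl | hka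
    · simp
    · simp [hka, hb k hka]

end trimmedSimplex

/-- Lemma A.1 (convex polyhedra without sectional projections): for every `n ≥ 3`
there is an `n`-dimensional bounded convex polyhedron `K ⊆ ℝ^n` such that for every
nonzero vector `v` and every affine hyperplane `H = {x | L x = c}` whose direction
does not contain `v`, the projection onto `H` parallel to `v` satisfies
`π(K) ≠ K ∩ H`. -/
theorem exists_polyhedron_without_sectional_projections (n : ℕ) (hn : 3 ≤ n) :
    ∃ K : Set (Fin n → ℝ), IsConvexPolyhedron n K ∧ IsBounded K ∧ polyDim n K = n ∧
      ∀ (v : Fin n → ℝ) (L : (Fin n → ℝ) →ₗ[ℝ] ℝ) (c : ℝ),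
        v ≠ 0 → L ≠ 0 → L v ≠ 0 →
        (fun x => x + ((c - L x) / L v) • v) '' K ≠ K ∩ {x | L x = c} :=
  ⟨trimmedSimplex n, trimmedSimplex.isConvexPolyhedron (by omega), trimmedSimplex.isBounded,
    trimmedSimplex.finrank_direction_affineSpan,
    fun _ _ _ hv hL hLv => trimmedSimplex.not_isSectionalProjection hn hv hL hLv⟩
end

section
/- Let n ≥ 4 and let P ⊂ ℝ^{n−1} be a bounded convex polyhedron of dimension n−1 without sectional projections, that is: for every nonzero vector w ∈ ℝ^{n−1} and every affine hyperplane H ⊂ ℝ^{n−1} whose direction does not contain w, the projection ρ : ℝ^{n−1} → H parallel to w satisfies ρ(P) ≠ P ∩ H. Set K := P × [0,∞) ⊂ ℝ^n. Then K cannot be placed in first trimming position with respect to any of its facets, and K cannot be placed in second trimming position with respect to any of its unbounded facets. -/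
open Bornology Pointwise

/-!
Let `e` be the last basis vector, the recession direction of `K = P × [0, ∞)`, and `T` an affine
automorphism. In either trimming position `T e` is horizontal (its last coordinate vanishes). In
the second one because an unbounded face of `K` contains vertical rays (a face transverse to `e` is
a bounded section of the cylinder) and is mapped into `{x_n = 0}`. In the first one, bounded fibres
give `π_n (T e) ≠ 0`; far out on a ray `π_n (T x) + t • π_n (T e)` we leave the bounded set
`A_{T K}` while the fibres stay nonempty, so these points lie in `T K`, and as `P` is bounded this
forces `π_n (T e)` to be parallel to `T e`.

Once `T e` is horizontal, `T⁻¹ {x_n = 0}` is a vertical hyperplane `H × ℝ`, and `T⁻¹ ∘ π_n ∘ T`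
induces on `ℝ^{n-1}` a parallel projection `ρ` onto `H`. If `ρ p ∉ P` for some `p ∈ P`, then
`π_n (T x) ∉ T K` for every `x` above `p`, so `A_{T K}` contains the ray of the points
`π_n (T (p, t))`, `t ≥ 0`. Hence `ρ P ⊆ P`, i.e. `ρ` is a sectional projection of `P`.
-/

open Filter

section Rays

variable {E : Type*} [NormedAddCommGroup E] [NormedSpace ℝ E]

lemma tendsto_add_smul_cobounded (a : E) {v : E} (hv : v ≠ 0) :
    Tendsto (fun t : ℝ => a + t • v) atTop (cobounded E) := by
  rw [← tendsto_norm_atTop_iff_cobounded]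
  refine tendsto_atTop_mono' atTop ?_
    (tendsto_atTop_add_const_right _ (-‖a‖) (tendsto_id.atTop_mul_const (norm_pos_iff.2 hv)))
  filter_upwards [eventually_ge_atTop 0] with t ht
  have h := norm_sub_le (a + t • v) a
  rw [add_sub_cancel_left, norm_smul, Real.norm_of_nonneg ht] at h
  simp only [id]
  linarith

lemma eq_zero_of_eventually_add_smul_mem {S : Set E} (hS : IsBounded S) {a v : E}
    (h : ∀ᶠ t : ℝ in atTop, a + t • v ∈ S) : v = 0 := by
  by_contra hv
  obtain ⟨t, hout, hin⟩ :=
    ((tendsto_add_smul_cobounded a hv).eventually (isBounded_def.1 hS)).and h |>.exists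
  exact hout hin

lemma not_isBounded_of_forall_add_smul_mem {S : Set E} {a v : E} (hv : v ≠ 0)
    (h : ∀ t : ℝ, 0 ≤ t → a + t • v ∈ S) : ¬ IsBounded S := fun hS =>
  hv (eq_zero_of_eventually_add_smul_mem hS ((eventually_ge_atTop 0).mono h))

end Rays

lemma AffineEquiv.apply_add_smul {V W : Type*} [AddCommGroup V] [Module ℝ V] [AddCommGroup W]
    [Module ℝ W] (T : V ≃ᵃ[ℝ] W) (x y : V) (t : ℝ) : T (x + t • y) = T x + t • T.linear y := by
  rw [add_comm x, ← vadd_eq_add, T.map_vadd, map_smul, vadd_eq_add, add_comm]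

section SectionalProjection

variable {E : Type*} [AddCommGroup E] [Module ℝ E]

def HasSectionalProjection (P : Set E) : Prop :=
  ∃ (w : E) (L : E →ₗ[ℝ] ℝ) (c : ℝ), w ≠ 0 ∧ L ≠ 0 ∧ L w ≠ 0 ∧
    (fun x => x + ((c - L x) / L w) • w) '' P = P ∩ {x | L x = c}

lemma hasSectionalProjection_empty [Nontrivial E] : HasSectionalProjection (∅ : Set E) := by
  obtain ⟨w, hw⟩ := exists_ne (0 : E)
  obtain ⟨L, hL⟩ := Module.Projective.exists_dual_ne_zero ℝ hw
  exact ⟨w, L, 0, hw, fun h => hL (by simp [h]), hL, by simp⟩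

lemma hasSectionalProjection_of_forall_add_smul_mem {P : Set E} {v : E} {L : E →ₗ[ℝ] ℝ} {c : ℝ}
    (hLv : L v = 1) (hP : ∀ p ∈ P, p + (c - L p) • v ∈ P) : HasSectionalProjection P := by
  refine ⟨v, L, c, fun h => by simp [h] at hLv, fun h => by simp [h] at hLv, by simp [hLv], ?_⟩
  ext q
  simp only [hLv, div_one, Set.mem_image, Set.mem_inter_iff, Set.mem_ofPred_eq]
  constructor
  · rintro ⟨p, hp, rfl⟩
    exact ⟨hP p hp, by simp [hLv]⟩
  · rintro ⟨hq, rfl⟩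
    exact ⟨q, hq, by simp⟩

end SectionalProjection

namespace PolyhedralCylinder

def lastIdx (n : ℕ) [NeZero n] : Fin n := ⟨n - 1, Nat.sub_one_lt (NeZero.ne n)⟩

noncomputable def lastBasis (n : ℕ) [NeZero n] : Fin n → ℝ := Pi.single (lastIdx n) 1

def initCoords (n : ℕ) : (Fin n → ℝ) →ₗ[ℝ] Fin (n - 1) → ℝ :=
  LinearMap.funLeft ℝ ℝ (Fin.castLE (Nat.sub_le n 1))

noncomputable def extendByZero (n : ℕ) : (Fin (n - 1) → ℝ) →ₗ[ℝ] Fin n → ℝ :=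
  Function.ExtendByZero.linearMap ℝ (Fin.castLE (Nat.sub_le n 1))

def cylinder (n : ℕ) [NeZero n] (P : Set (Fin (n - 1) → ℝ)) : Set (Fin n → ℝ) :=
  {x | initCoords n x ∈ P ∧ 0 ≤ x (lastIdx n)}

variable {n : ℕ}

lemma val_eq_sub_one_iff [NeZero n] {i : Fin n} : (i : ℕ) = n - 1 ↔ i = lastIdx n := by
  simp [Fin.ext_iff, lastIdx]

lemma castLE_ne_lastIdx [NeZero n] (j : Fin (n - 1)) :
    Fin.castLE (Nat.sub_le n 1) j ≠ lastIdx n :=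
  fun h => (Fin.ext_iff.1 h ▸ j.isLt).false

@[simp]
lemma initCoords_apply (x : Fin n → ℝ) (j : Fin (n - 1)) :
    initCoords n x j = x (Fin.castLE (Nat.sub_le n 1) j) := rfl

@[simp]
lemma initCoords_extendByZero (p : Fin (n - 1) → ℝ) : initCoords n (extendByZero n p) = p := by
  ext j
  exact (Fin.castLE_injective _).extend_apply p 0 j

@[simp]
lemma extendByZero_lastIdx [NeZero n] (p : Fin (n - 1) → ℝ) : extendByZero n p (lastIdx n) = 0 :=
  Function.extend_apply' _ _ _ fun ⟨j, hj⟩ => castLE_ne_lastIdx j hj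

@[simp]
lemma initCoords_lastBasis [NeZero n] : initCoords n (lastBasis n) = 0 := by
  ext j
  simp [lastBasis, castLE_ne_lastIdx]

@[simp]
lemma lastBasis_lastIdx [NeZero n] : lastBasis n (lastIdx n) = 1 := by
  simp [lastBasis]

lemma lastBasis_ne_zero [NeZero n] : lastBasis n ≠ 0 := by
  simp [lastBasis]

lemma exists_castLE_eq [NeZero n] {i : Fin n} (hi : i ≠ lastIdx n) :
    ∃ j : Fin (n - 1), Fin.castLE (Nat.sub_le n 1) j = i :=
  ⟨⟨i, by have := i.isLt; have := mt val_eq_sub_one_iff.1 hi; omega⟩, rfl⟩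

lemma extendByZero_initCoords_add [NeZero n] (x : Fin n → ℝ) :
    extendByZero n (initCoords n x) + x (lastIdx n) • lastBasis n = x := by
  ext i
  by_cases hi : i = lastIdx n
  · simp [hi]
  · obtain ⟨j, rfl⟩ := exists_castLE_eq hi
    simpa [lastBasis, castLE_ne_lastIdx] using
      congrFun (initCoords_extendByZero (initCoords n x)) j

lemma projLast_eq [NeZero n] (x : Fin n → ℝ) :
    projLast n x = x - x (lastIdx n) • lastBasis n := by
  ext i
  by_cases hi : i = lastIdx n <;> simp [projLast, val_eq_sub_one_iff, hi, lastBasis]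

@[simp]
lemma projLast_lastIdx [NeZero n] (x : Fin n → ℝ) : projLast n x (lastIdx n) = 0 := by
  simp [projLast_eq]

lemma projLast_of_lastIdx_eq_zero [NeZero n] {x : Fin n → ℝ} (hx : x (lastIdx n) = 0) :
    projLast n x = x := by
  simp [projLast_eq, hx]

lemma projLast_add_smul [NeZero n] (x y : Fin n → ℝ) (t : ℝ) :
    projLast n (x + t • y) = projLast n x + t • projLast n y := by
  simp only [projLast_eq, Pi.add_apply, Pi.smul_apply, smul_eq_mul]
  module

lemma projLast_mem_AKset {K : Set (Fin n → ℝ)} {x : Fin n → ℝ} (hx : x ∈ K)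
    (hnot : projLast n x ∉ K) : projLast n x ∈ AKset n K :=
  ⟨fun i hi => by simp [projLast, hi], ⟨x, rfl, hx⟩, hnot⟩

lemma add_smul_lastBasis_mem_cylinder [NeZero n] {P : Set (Fin (n - 1) → ℝ)} {x : Fin n → ℝ}
    (hx : x ∈ cylinder n P) {t : ℝ} (ht : 0 ≤ t) : x + t • lastBasis n ∈ cylinder n P := by
  refine ⟨by simpa using hx.1, ?_⟩
  simpa using add_nonneg hx.2 ht

lemma extendByZero_add_smul_mem_cylinder [NeZero n] {P : Set (Fin (n - 1) → ℝ)}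
    {p : Fin (n - 1) → ℝ} (hp : p ∈ P) {t : ℝ} (ht : 0 ≤ t) :
    extendByZero n p + t • lastBasis n ∈ cylinder n P :=
  add_smul_lastBasis_mem_cylinder ⟨by simpa using hp, by simp⟩ ht

lemma symm_projLast_apply [NeZero n] (T : (Fin n → ℝ) ≃ᵃ[ℝ] (Fin n → ℝ)) (x : Fin n → ℝ) :
    T.symm (projLast n (T x)) = x - T x (lastIdx n) • T.linear.symm (lastBasis n) := by
  rw [projLast_eq, sub_eq_add_neg, ← neg_smul, T.symm.apply_add_smul, T.symm_apply_apply,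
    AffineEquiv.linear_symm, neg_smul, ← sub_eq_add_neg]

theorem hasSectionalProjection_of_isBounded_AKset [NeZero n] {P : Set (Fin (n - 1) → ℝ)}
    (T : (Fin n → ℝ) ≃ᵃ[ℝ] (Fin n → ℝ)) (hT : T.linear (lastBasis n) (lastIdx n) = 0)
    (hA : IsBounded (AKset n (T '' cylinder n P))) : HasSectionalProjection P := by
  -- `T⁻¹ {x_n = 0}` is the vertical hyperplane `{x | L (initCoords n x) = c}`, and
  -- `T⁻¹ ∘ projLast n ∘ T` projects onto it along `T⁻¹ e`.
  let L : (Fin (n - 1) → ℝ) →ₗ[ℝ] ℝ :=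
    LinearMap.proj (lastIdx n) ∘ₗ T.linear.toLinearMap ∘ₗ extendByZero n
  have hL : ∀ p, T (extendByZero n p) (lastIdx n) = T 0 (lastIdx n) + L p := fun p => by
    simpa [L] using congrFun (T.apply_add_smul 0 (extendByZero n p) 1) (lastIdx n)
  have hw : T.linear (lastBasis n) ≠ 0 := (T.linear.map_ne_zero_iff).2 lastBasis_ne_zero
  refine hasSectionalProjection_of_forall_add_smul_mem
    (v := initCoords n (T.linear.symm (lastBasis n))) (L := L) (c := -T 0 (lastIdx n))
    ?_ fun p hp => ?_
  · have h := congrFun (congrArg T.linear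
      (extendByZero_initCoords_add (T.linear.symm (lastBasis n)))) (lastIdx n)
    simpa [L, hT] using h
  by_contra hq
  refine not_isBounded_of_forall_add_smul_mem (a := projLast n (T (extendByZero n p))) hw
    (fun t ht => ?_) hA
  rw [← projLast_of_lastIdx_eq_zero hT, ← projLast_add_smul, ← T.apply_add_smul]
  refine projLast_mem_AKset
    (Set.mem_image_of_mem T (extendByZero_add_smul_mem_cylinder hp ht)) ?_
  rintro ⟨z, hz, hzeq⟩
  have hz' := symm_projLast_apply T (extendByZero n p + t • lastBasis n)
  rw [← hzeq, T.symm_apply_apply] at hz'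
  refine hq ?_
  convert hz.1 using 1
  rw [hz', T.apply_add_smul, Pi.add_apply, hL]
  simp only [map_sub, map_add, map_smul, initCoords_extendByZero, initCoords_lastBasis,
    Pi.smul_apply, hT]
  module

lemma projLast_linear_lastBasis_ne_zero [NeZero n] {P : Set (Fin (n - 1) → ℝ)}
    (hP : P.Nonempty) (T : (Fin n → ℝ) ≃ᵃ[ℝ] (Fin n → ℝ))
    (hfib : ∀ y, IsBounded ({x | projLast n x = y} ∩ T '' cylinder n P)) :
    projLast n (T.linear (lastBasis n)) ≠ 0 := by
  intro h
  obtain ⟨p, hp⟩ := hP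
  refine not_isBounded_of_forall_add_smul_mem (a := T (extendByZero n p))
    ((T.linear.map_ne_zero_iff).2 lastBasis_ne_zero) (fun t ht => ?_)
    (hfib (projLast n (T (extendByZero n p))))
  rw [← T.apply_add_smul]
  refine ⟨?_, Set.mem_image_of_mem T (extendByZero_add_smul_mem_cylinder hp ht)⟩
  simp [T.apply_add_smul, projLast_add_smul, h]

lemma linear_lastBasis_lastIdx_eq_zero_of_isBounded_AKset [NeZero n]
    {P : Set (Fin (n - 1) → ℝ)} (hPb : IsBounded P) (hP : P.Nonempty)
    (T : (Fin n → ℝ) ≃ᵃ[ℝ] (Fin n → ℝ)) (hA : IsBounded (AKset n (T '' cylinder n P)))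
    (hw : projLast n (T.linear (lastBasis n)) ≠ 0) :
    T.linear (lastBasis n) (lastIdx n) = 0 := by
  obtain ⟨p, hp⟩ := hP
  set u := projLast n (T.linear (lastBasis n))
  set a := projLast n (T (extendByZero n p))
  have hray : ∀ᶠ t : ℝ in atTop, T.symm a + t • T.linear.symm u ∈ cylinder n P := by
    filter_upwards [eventually_ge_atTop 0,
      (tendsto_add_smul_cobounded a hw).eventually (isBounded_def.1 hA)] with t ht hout
    by_contra hnot
    refine hout ?_
    have hproj : projLast n (T (extendByZero n p + t • lastBasis n)) = a + t • u := by
      rw [T.apply_add_smul, projLast_add_smul]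
    rw [← hproj]
    refine projLast_mem_AKset
      (Set.mem_image_of_mem T (extendByZero_add_smul_mem_cylinder hp ht)) ?_
    rintro ⟨z, hz, hzeq⟩
    rw [hproj] at hzeq
    rw [← T.symm_apply_apply z, hzeq, T.symm.apply_add_smul, AffineEquiv.linear_symm] at hz
    exact hnot hz
  have hinit : initCoords n (T.linear.symm u) = 0 :=
    eq_zero_of_eventually_add_smul_mem hPb (hray.mono fun t ht => by simpa using ht.1)
  have hvert : T.linear.symm u = T.linear.symm u (lastIdx n) • lastBasis n := by
    simpa [hinit] using (extendByZero_initCoords_add (T.linear.symm u)).symm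
  have hu : u = T.linear.symm u (lastIdx n) • T.linear (lastBasis n) := by
    conv_lhs => rw [← T.linear.apply_symm_apply u, hvert, map_smul]
  have hlast : T.linear.symm u (lastIdx n) * T.linear (lastBasis n) (lastIdx n) = 0 := by
    simpa [u] using (congrFun hu (lastIdx n)).symm
  refine (mul_eq_zero.1 hlast).resolve_left fun h0 => hw ?_
  rw [hu, h0, zero_smul]

lemma isBounded_cylinder_inter_of_apply_lastBasis_ne_zero [NeZero n]
    {P : Set (Fin (n - 1) → ℝ)} (hP : IsBounded P) {L : (Fin n → ℝ) →ₗ[ℝ] ℝ}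
    (hL : L (lastBasis n) ≠ 0) (c : ℝ) :
    IsBounded (cylinder n P ∩ {x | L x = c}) := by
  let g : (Fin (n - 1) → ℝ) → Fin n → ℝ := fun p =>
    extendByZero n p + ((c - L (extendByZero n p)) / L (lastBasis n)) • lastBasis n
  have hg : Continuous g := by
    have := (extendByZero n).continuous_of_finiteDimensional
    have := L.continuous_of_finiteDimensional
    fun_prop
  refine ((hP.isCompact_closure.image hg).isBounded.subset ?_)
  rintro x ⟨hx, hLx⟩
  have hdecomp := congrArg L (extendByZero_initCoords_add x)
  rw [map_add, map_smul, smul_eq_mul] at hdecomp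
  have hlast : (c - L (extendByZero n (initCoords n x))) / L (lastBasis n) = x (lastIdx n) := by
    rw [div_eq_iff hL]
    linarith [show L x = c from hLx]
  exact ⟨initCoords n x, subset_closure hx.1, by simp only [g, hlast, extendByZero_initCoords_add]⟩

lemma linear_lastBasis_lastIdx_eq_zero_of_isFaceOf [NeZero n] {P : Set (Fin (n - 1) → ℝ)}
    (hP : IsBounded P) {F : Set (Fin n → ℝ)} (hF : IsFaceOf n (cylinder n P) F)
    (hFub : ¬ IsBounded F) (T : (Fin n → ℝ) ≃ᵃ[ℝ] (Fin n → ℝ))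
    (hTF : ∀ x ∈ T '' F, x (lastIdx n) = 0) :
    T.linear (lastBasis n) (lastIdx n) = 0 := by
  obtain ⟨L, c, -, ⟨x, hxK, hxL⟩, -, rfl⟩ := hF
  have hLe : L (lastBasis n) = 0 := by
    by_contra hne
    exact hFub (isBounded_cylinder_inter_of_apply_lastBasis_ne_zero hP hne c)
  have hray : ∀ t : ℝ, 0 ≤ t →
      T x (lastIdx n) + t * T.linear (lastBasis n) (lastIdx n) = 0 := by
    intro t ht
    have hmem : x + t • lastBasis n ∈ cylinder n P ∩ {x | L x = c} :=
      ⟨add_smul_lastBasis_mem_cylinder hxK ht, by simpa [hLe] using hxL⟩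
    simpa [T.apply_add_smul] using hTF _ (Set.mem_image_of_mem T hmem)
  linarith [hray 0 le_rfl, hray 1 zero_le_one]

end PolyhedralCylinder

open PolyhedralCylinder

/-- Corollary A.2 (counterexamples to the trimming positions): if `P ⊆ ℝ^{n-1}`
(`n ≥ 4`) is a bounded convex polyhedron of dimension `n-1` without sectional
projections, then `K := P × [0,∞) ⊆ ℝ^n` can be placed neither in first trimming
position with respect to any of its facets nor in second trimming position with
respect to any of its unbounded facets. -/
theorem counterexample_to_trimming_positions (n : ℕ) (hn : 4 ≤ n)
    (P : Set (Fin (n - 1) → ℝ))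
    (hbd : IsBounded P)
    (hnsp : ∀ (w : Fin (n - 1) → ℝ) (L : (Fin (n - 1) → ℝ) →ₗ[ℝ] ℝ) (c : ℝ),
      w ≠ 0 → L ≠ 0 → L w ≠ 0 →
      (fun x => x + ((c - L x) / L w) • w) '' P ≠ P ∩ {x | L x = c})
    (K : Set (Fin n → ℝ))
    (hK : K = {x : Fin n → ℝ |
      (fun j : Fin (n - 1) => x (Fin.castLE (by omega) j)) ∈ P ∧
      0 ≤ x ⟨n - 1, by omega⟩}) :
    (∀ F, IsFacetOf n K F →
      ¬ ∃ T : (Fin n → ℝ) ≃ᵃ[ℝ] (Fin n → ℝ),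
        FirstTrimmingPosition n (T '' K) (T '' F)) ∧
    (∀ F, IsFacetOf n K F → ¬ IsBounded F →
      ¬ ∃ T : (Fin n → ℝ) ≃ᵃ[ℝ] (Fin n → ℝ),
        SecondTrimmingPosition n (T '' K) (T '' F)) := by
  have : NeZero n := ⟨by omega⟩
  obtain rfl : K = cylinder n P := hK
  have hsp : ¬ HasSectionalProjection P := fun ⟨w, L, c, hw, hL, hLw, h⟩ =>
    hnsp w L c hw hL hLw h
  have hP : P.Nonempty := by
    have : NeZero (n - 1) := ⟨by omega⟩
    exact Set.nonempty_iff_ne_empty.2 fun h => hsp (h ▸ hasSectionalProjection_empty)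
  refine ⟨?_, ?_⟩
  · rintro F - ⟨T, -, -, -, hfib, hA⟩
    exact hsp (hasSectionalProjection_of_isBounded_AKset T
      (linear_lastBasis_lastIdx_eq_zero_of_isBounded_AKset hbd hP T hA
        (projLast_linear_lastBasis_ne_zero hP T hfib)) hA)
  · rintro F hF hFub ⟨T, -, hTF, -, hA⟩
    exact hsp (hasSectionalProjection_of_isBounded_AKset T
      (linear_lastBasis_lastIdx_eq_zero_of_isFaceOf hbd hF.1 hFub T
        fun x hx => hTF x hx _ rfl) hA)
end
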